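/- arXiv:2105.12184 — 2 statements merged into one kernel-verified Lean document; each statement's English description precedes it below -/
import Mathlib

section
/- With G defined as the parameter-word structure over the alphabet Σ of two-element substructures of K, there exists a completion c : G → K, i.e., an injective homomorphism-embedding from G into K. -/
/-- A structure in a relational language with unary symbols `L1` and binary symbols `L2`,
on vertex set `V`. -/
structure Str (L1 L2 V : Type) where
  unary : L1 → V → Prop
  rel : L2 → V → V → Prop

namespace Str

variable {L1 L2 V W : Type}

/-- Two distinct vertices are adjacent if some binary relation holds between them
in either order. -/
def Adj (A : Str L1 L2 V) (x y : V) : Prop :=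
  x ≠ y ∧ ∃ r, A.rel r x y ∨ A.rel r y x

/-- The substructure induced on a set of vertices. -/
def Induced (A : Str L1 L2 V) (S : Set V) : Str L1 L2 S where
  unary r x := A.unary r x.1
  rel r x y := A.rel r x.1 y.1

/-- Homomorphism of structures. -/
def IsHom (A : Str L1 L2 V) (B : Str L1 L2 W) (f : V → W) : Prop :=
  (∀ r x, A.unary r x → B.unary r (f x)) ∧
  (∀ r x y, A.rel r x y → B.rel r (f x) (f y))

/-- Embedding of structures. -/
def IsEmb (A : Str L1 L2 V) (B : Str L1 L2 W) (f : V → W) : Prop :=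
  Function.Injective f ∧
  (∀ r x, A.unary r x ↔ B.unary r (f x)) ∧
  (∀ r x y, A.rel r x y ↔ B.rel r (f x) (f y))

/-- A structure is irreducible if any two distinct vertices are adjacent. -/
def Irred (A : Str L1 L2 V) : Prop :=
  ∀ x y : V, x ≠ y → A.Adj x y

/-- A homomorphism-embedding: a homomorphism whose restriction to every irreducible
substructure is an embedding. -/
def IsHomEmb (A : Str L1 L2 V) (B : Str L1 L2 W) (f : V → W) : Prop :=
  A.IsHom B f ∧
  ∀ S : Set V, (A.Induced S).Irred → (A.Induced S).IsEmb B (fun x => f x.1)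

/-- A (strong) completion of `A` to `K`: an injective homomorphism-embedding into the
irreducible structure `K`. -/
def IsCompletion (A : Str L1 L2 V) (K : Str L1 L2 W) (f : V → W) : Prop :=
  K.Irred ∧ Function.Injective f ∧ A.IsHomEmb K f

/-- A cycle: a cyclic sequence of `ℓ ≥ 3` distinct vertices with consecutive vertices
adjacent. -/
def IsCycle (A : Str L1 L2 V) (ℓ : ℕ) (v : ZMod ℓ → V) : Prop :=
  3 ≤ ℓ ∧ Function.Injective v ∧ ∀ i, A.Adj (v i) (v (i + 1))

/-- An induced cycle: no adjacencies other than the consecutive ones. -/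
def IsInducedCycle (A : Str L1 L2 V) (ℓ : ℕ) (v : ZMod ℓ → V) : Prop :=
  A.IsCycle ℓ v ∧
  ∀ i j, i ≠ j → j ≠ i + 1 → i ≠ j + 1 → ¬ A.Adj (v i) (v j)

/-- Every induced cycle of `A` (seen as a substructure) has a completion to `K`. -/
def CycleCompletes (A : Str L1 L2 V) (K : Str L1 L2 W) : Prop :=
  ∀ (ℓ : ℕ) (v : ZMod ℓ → V), A.IsInducedCycle ℓ v →
    ∃ f : Set.range v → W, (A.Induced (Set.range v)).IsCompletion K f

/-- Every irreducible substructure of `A` of size at most `c` embeds into `K`. -/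
def SmallIrredEmbed (A : Str L1 L2 V) (K : Str L1 L2 W) (c : ℕ) : Prop :=
  ∀ S : Set V, S.Finite → S.ncard ≤ c → (A.Induced S).Irred →
    ∃ f : S → W, (A.Induced S).IsEmb K f

end Str

/-- The hypothesis of Theorem 1: every countable structure `A` has a completion to `K`
provided every induced cycle of `A` completes to `K` and every irreducible substructure
of `A` of size at most 2 embeds into `K`. -/
def CompletionHyp {L1 L2 W : Type} (K : Str L1 L2 W) : Prop :=
  ∀ (V : Type) [Countable V] (A : Str L1 L2 V),
    A.CycleCompletes K → A.SmallIrredEmbed K 2 →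
      ∃ f : V → W, A.IsCompletion K f

/-- `D` is the triangle structure `△(A,B,C)`: `0↦0,1↦1` embeds `A`, `0↦1,1↦2` embeds `B`
and `0↦0,1↦2` embeds `C`. -/
def IsTri {L1 L2 : Type} (A B C : Str L1 L2 (Fin 2)) (D : Str L1 L2 (Fin 3)) : Prop :=
  A.IsEmb D ![0, 1] ∧ B.IsEmb D ![1, 2] ∧ C.IsEmb D ![0, 2]

/-- The alphabet `Σ`: two-element structures embedding into `K`. -/
def Sig {L1 L2 W : Type} (K : Str L1 L2 W) : Type :=
  {A : Str L1 L2 (Fin 2) // ∃ f : Fin 2 → W, A.IsEmb K f}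

/-- Condition (A1): all letters of the word induce the same structure on `{1}`. -/
def A1cond {L1 L2 W : Type} {K : Str L1 L2 W} (U : List (Sig K)) : Prop :=
  ∀ (i j : ℕ) (hi : i < U.length) (hj : j < U.length),
    (∀ r, (U.get ⟨i, hi⟩).1.unary r 1 ↔ (U.get ⟨j, hj⟩).1.unary r 1) ∧
    (∀ r, (U.get ⟨i, hi⟩).1.rel r 1 1 ↔ (U.get ⟨j, hj⟩).1.rel r 1 1)

/-- Vertices of `G`: nonempty finite words over `Σ` satisfying (A1). -/
def GVert {L1 L2 W : Type} (K : Str L1 L2 W) : Type :=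
  {U : List (Sig K) // U ≠ [] ∧ A1cond U}

/-- Condition (A2): for all `i < |U|`, the triangle `△(U_i, V_{|U|}, V_i)` is defined and
embeds into `K`. -/
def GTri {L1 L2 W : Type} (K : Str L1 L2 W) (U V : GVert K)
    (h : U.1.length < V.1.length) : Prop :=
  ∀ (i : ℕ) (hi : i < U.1.length),
    ∃ D : Str L1 L2 (Fin 3),
      IsTri (U.1.get ⟨i, hi⟩).1 (V.1.get ⟨U.1.length, h⟩).1 (V.1.get ⟨i, hi.trans h⟩).1 D ∧
      ∃ f : Fin 3 → W, D.IsEmb K f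

/-- The structure `G`: whenever `|U| < |V|` and (A2) holds, the map `0 ↦ U, 1 ↦ V` is an
embedding of the two-element structure `V_{|U|}` into `G`; there are no other tuples. -/
def Gstr {L1 L2 W : Type} (K : Str L1 L2 W) : Str L1 L2 (GVert K) where
  unary r U :=
    (∃ V, ∃ h : U.1.length < V.1.length,
      GTri K U V h ∧ (V.1.get ⟨U.1.length, h⟩).1.unary r 0) ∨
    (∃ V, ∃ h : V.1.length < U.1.length,
      GTri K V U h ∧ (U.1.get ⟨V.1.length, h⟩).1.unary r 1)
  rel r U V :=
    (∃ h : U.1.length < V.1.length,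
      GTri K U V h ∧ (V.1.get ⟨U.1.length, h⟩).1.rel r 0 1) ∨
    (∃ h : V.1.length < U.1.length,
      GTri K V U h ∧ (U.1.get ⟨V.1.length, h⟩).1.rel r 1 0) ∨
    (U = V ∧
      ((∃ Q, ∃ h : U.1.length < Q.1.length,
          GTri K U Q h ∧ (Q.1.get ⟨U.1.length, h⟩).1.rel r 0 0) ∨
       (∃ Q, ∃ h : Q.1.length < U.1.length,
          GTri K Q U h ∧ (U.1.get ⟨Q.1.length, h⟩).1.rel r 1 1)))

/-!
`G` is countable, so by the hypothesis on `K` it suffices that its irreducible substructures on at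
most two vertices embed into `K` and that its induced cycles complete to `K`.

An edge `U, V` of `G` with `|U| < |V|` is a copy of the letter `V_{|U|}`, and a vertex `U` with a
neighbour has the type of the vertex `1` of its letters. A neighbour exists: for `|U| = 1` it is
built inside the infinite structure `K`, and otherwise from a completion of the free amalgam of
`U_0` and `U_1` over their vertex `1`.

On an induced cycle let `n` be the least length of a vertex. Merging the vertices of length `n`
into one vertex joined to every longer `V` by the letter `V_n` (by (A2) along the cycle, these
letters all give their vertex `0` the type of the merged vertices) gives a structure whose induced
cycles are triangles realised by the triangles of (A2) at position `n`. Its completion places the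
cycle in `K`, realising every edge but identifying the shortest vertices. Pulling `K` back along
this placement and keeping only the edges of the cycle and the chords between its longer vertices
gives a chordal structure; its completion, which exists by hypothesis, completes the cycle.
-/

theorem ZMod.add_natCast_ne_self {ℓ k : ℕ} (i : ZMod ℓ) (hk : 0 < k) (hkℓ : k < ℓ) :
    i + k ≠ i := by
  rw [Ne, add_eq_left, ZMod.natCast_eq_zero_iff]
  exact Nat.not_dvd_of_pos_of_lt hk hkℓ

theorem ZMod.eq_of_apply_add_one_eq {α : Type} {n : ℕ} [NeZero n] {f : ZMod n → α}
    (h : ∀ j, f (j + 1) = f j) (i j : ZMod n) : f i = f j := by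
  have hk : ∀ k : ℕ, f (j + k) = f j := by
    intro k
    induction k with
    | zero => simp
    | succ k ih => rw [Nat.cast_succ, ← add_assoc, h, ih]
  simpa using hk (i - j).val

theorem ZMod.val_add_one_of_add_one_ne_zero {n : ℕ} [NeZero n] {x : ZMod n} (h : x + 1 ≠ 0) :
    (x + 1).val = x.val + 1 := by
  have hlt : x.val + 1 < n := by
    by_contra hge
    have hn := congrArg (Nat.cast : ℕ → ZMod n) (le_antisymm x.val_lt (not_lt.1 hge))
    push_cast at hn
    rw [ZMod.natCast_zmod_val, ZMod.natCast_self] at hn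
    exact h hn
  calc (x + 1).val = ((x.val + 1 : ℕ) : ZMod n).val := by push_cast; rw [ZMod.natCast_zmod_val]
    _ = x.val + 1 := ZMod.val_natCast_of_lt hlt

theorem ZMod.surjective_of_injective_of_step {ℓ ℓ' : ℕ} [NeZero ℓ] (hℓ' : 3 ≤ ℓ')
    {f : ZMod ℓ' → ZMod ℓ} (hf : Function.Injective f)
    (hstep : ∀ t, f (t + 1) = f t + 1 ∨ f t = f (t + 1) + 1) : Function.Surjective f := by
  have : NeZero ℓ' := ⟨by omega⟩
  intro j0
  by_contra! hne
  -- Where the distance `P` from `j0` along the path `ZMod ℓ \ {j0}` is largest, the walk turns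
  -- back, so its two neighbours coincide.
  set P : ZMod ℓ' → ℕ := fun t => (f t - j0).val
  have hP : ∀ s t, f s = f t + 1 → P s = P t + 1 := by
    intro s t h
    have hs : f s - j0 = f t - j0 + 1 := by rw [h]; ring
    simp only [P]
    rw [hs, ZMod.val_add_one_of_add_one_ne_zero (hs ▸ sub_ne_zero.2 (hne s))]
  have hPstep : ∀ s, P (s + 1) = P s + 1 ∨ P s = P (s + 1) + 1 := fun s =>
    (hstep s).imp (hP _ _) (hP _ _)
  obtain ⟨t, -, hmax⟩ := Finset.exists_max_image Finset.univ P Finset.univ_nonempty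
  have hprev := hPstep (t - 1)
  rw [sub_add_cancel] at hprev
  have heq : P (t - 1) = P (t + 1) := by
    have := hmax (t - 1) (Finset.mem_univ _)
    have := hmax (t + 1) (Finset.mem_univ _)
    have := hPstep t
    omega
  have ht : t - 1 = t + 1 := hf (by simpa [P] using ZMod.val_injective _ heq)
  apply (t - 1).add_natCast_ne_self (k := 2) (by norm_num) (by omega)
  calc t - 1 + ((2 : ℕ) : ZMod ℓ') = t + 1 := by push_cast; ring
    _ = t - 1 := ht.symm

section Vectors

variable {α : Type}

theorem injective_vec_three {a b c : α} (hab : a ≠ b) (hac : a ≠ c) (hbc : b ≠ c) :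
    Function.Injective ![a, b, c] := by
  intro i j hij
  fin_cases i <;> fin_cases j <;> simp_all [eq_comm]

theorem comp_vec_two {β : Type} (f : β → α) (a b : β) : f ∘ ![a, b] = ![f a, f b] := by
  funext i
  fin_cases i <;> rfl

theorem pair_subset_range {a b : α} : ({a, b} : Set α) ⊆ Set.range ![a, b] := by
  rintro _ (rfl | rfl)
  exacts [⟨0, rfl⟩, ⟨1, rfl⟩]

theorem pair_subset_range_swap {a b : α} : ({b, a} : Set α) ⊆ Set.range ![a, b] :=
  Set.pair_comm a b ▸ pair_subset_range

theorem triple_subset_range {a b c : α} : ({a, b, c} : Set α) ⊆ Set.range ![a, b, c] := by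
  rintro _ (rfl | rfl | rfl)
  exacts [⟨0, rfl⟩, ⟨1, rfl⟩, ⟨2, rfl⟩]

end Vectors

/-! ### Embeddings and completions -/

namespace Str

variable {L1 L2 V W X Y : Type}

theorem Adj.symm {A : Str L1 L2 V} {x y : V} (h : A.Adj x y) : A.Adj y x :=
  ⟨h.1.symm, h.2.imp fun _ hr => hr.symm⟩

def comap (A : Str L1 L2 V) (m : X → V) : Str L1 L2 X where
  unary r x := A.unary r (m x)
  rel r x y := A.rel r (m x) (m y)

def vertexType (A : Str L1 L2 V) (x : V) : (L1 → Prop) × (L2 → Prop) :=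
  (fun r => A.unary r x, fun r => A.rel r x x)

section VertexType

variable {A : Str L1 L2 V} {B : Str L1 L2 W} {x : V} {y : W}

theorem vertexType_eq_iff :
    A.vertexType x = B.vertexType y ↔
      (∀ r, A.unary r x ↔ B.unary r y) ∧ ∀ r, A.rel r x x ↔ B.rel r y y := by
  simp only [vertexType, Prod.mk.injEq, funext_iff, eq_iff_iff]

theorem unary_iff_of_vertexType_eq (h : A.vertexType x = B.vertexType y) (r : L1) :
    A.unary r x ↔ B.unary r y :=
  (vertexType_eq_iff.1 h).1 r

theorem rel_iff_of_vertexType_eq (h : A.vertexType x = B.vertexType y) (r : L2) :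
    A.rel r x x ↔ B.rel r y y :=
  (vertexType_eq_iff.1 h).2 r

end VertexType

namespace IsEmb

variable {A : Str L1 L2 V} {B : Str L1 L2 W} {C : Str L1 L2 X} {f : V → W}

theorem injective (h : A.IsEmb B f) : Function.Injective f := h.1

theorem unary_iff (h : A.IsEmb B f) (r : L1) (x : V) : A.unary r x ↔ B.unary r (f x) :=
  h.2.1 r x

theorem rel_iff (h : A.IsEmb B f) (r : L2) (x y : V) : A.rel r x y ↔ B.rel r (f x) (f y) :=
  h.2.2 r x y

theorem vertexType_eq (h : A.IsEmb B f) (x : V) : A.vertexType x = B.vertexType (f x) :=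
  vertexType_eq_iff.2 ⟨fun r => h.unary_iff r x, fun r => h.rel_iff r x x⟩

theorem of_vertexType (hf : Function.Injective f)
    (hv : ∀ x, A.vertexType x = B.vertexType (f x))
    (hr : ∀ r x y, x ≠ y → (A.rel r x y ↔ B.rel r (f x) (f y))) : A.IsEmb B f := by
  refine ⟨hf, fun r x => unary_iff_of_vertexType_eq (hv x) r, fun r x y => ?_⟩
  obtain rfl | hxy := eq_or_ne x y
  exacts [rel_iff_of_vertexType_eq (hv x) r, hr r x y hxy]

theorem adj_iff (h : A.IsEmb B f) {x y : V} : A.Adj x y ↔ B.Adj (f x) (f y) := by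
  simp only [Adj, h.injective.ne_iff, h.rel_iff]

theorem irred (h : A.IsEmb B f) (hB : B.Irred) : A.Irred := fun _ _ hxy =>
  h.adj_iff.2 (hB _ _ (h.injective.ne hxy))

theorem comp {g : W → X} (hf : A.IsEmb B f) (hg : B.IsEmb C g) : A.IsEmb C (g ∘ f) :=
  ⟨hg.injective.comp hf.injective, fun r x => (hf.unary_iff r x).trans (hg.unary_iff r _),
    fun r x y => (hf.rel_iff r x y).trans (hg.rel_iff r _ _)⟩

theorem eq_comap (h : A.IsEmb B f) : A = B.comap f := by
  obtain ⟨unary, rel⟩ := A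
  simp only [comap, mk.injEq]
  exact ⟨funext₂ fun r x => propext (h.unary_iff r x),
    funext₃ fun r x y => propext (h.rel_iff r x y)⟩

end IsEmb

section Comap

variable {A : Str L1 L2 V}

theorem isEmb_comap {m : X → V} (hm : Function.Injective m) : (A.comap m).IsEmb A m :=
  ⟨hm, fun _ _ => Iff.rfl, fun _ _ _ => Iff.rfl⟩

theorem isEmb_comap_iff {B : Str L1 L2 Y} {m : X → V} {g : Y → X}
    (hm : Function.Injective m) : B.IsEmb (A.comap m) g ↔ B.IsEmb A (m ∘ g) :=
  ⟨fun h => h.comp (isEmb_comap hm), fun h => ⟨Function.Injective.of_comp h.injective,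
    fun r x => h.unary_iff r x, fun r x y => h.rel_iff r x y⟩⟩

theorem isEmb_comap_comp {c : X → V} {m : Y → X} (hc : Function.Injective c)
    (hm : Function.Injective m) : (A.comap (c ∘ m)).IsEmb (A.comap c) m :=
  (isEmb_comap_iff hc).2 (isEmb_comap (hc.comp hm))

theorem isEmb_induced_val (S : Set V) : (A.Induced S).IsEmb A Subtype.val :=
  isEmb_comap Subtype.val_injective

theorem isEmb_induced_inclusion {S T : Set V} (hST : S ⊆ T) :
    (A.Induced S).IsEmb (A.Induced T) (Set.inclusion hST) :=
  ⟨Set.inclusion_injective hST, fun _ _ => Iff.rfl, fun _ _ _ => Iff.rfl⟩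

theorem isEmb_induced_range_symm {m : X → V} (hm : Function.Injective m) :
    (A.Induced (Set.range m)).IsEmb (A.comap m) (Equiv.ofInjective m hm).symm := by
  refine ⟨(Equiv.ofInjective m hm).symm.injective, fun r x => ?_, fun r x y => ?_⟩
  · change A.unary r x.1 ↔ A.unary r (m _)
    rw [Equiv.apply_ofInjective_symm hm x]
  · change A.rel r x.1 y.1 ↔ A.rel r (m _) (m _)
    rw [Equiv.apply_ofInjective_symm hm x, Equiv.apply_ofInjective_symm hm y]

end Comap

section Completion

variable {A : Str L1 L2 V} {B : Str L1 L2 X} {K : Str L1 L2 W}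

theorem IsEmb.irred_induced_range {m : X → V} (hm : B.IsEmb A m) (hB : B.Irred) :
    (A.Induced (Set.range m)).Irred := by
  rintro ⟨_, i, rfl⟩ ⟨_, j, rfl⟩ hne
  have hij : i ≠ j := by rintro rfl; exact hne rfl
  exact (isEmb_induced_val _).adj_iff.2 (hm.adj_iff.1 (hB i j hij))

theorem IsHomEmb.isEmb_comp {c : V → W} {m : X → V} (hc : A.IsHomEmb K c)
    (hm : B.IsEmb A m) (hB : B.Irred) : B.IsEmb K (c ∘ m) :=
  IsEmb.comp (f := Set.rangeFactorization m) (g := fun x => c x.1)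
    ((isEmb_comap_iff Subtype.val_injective).2 hm) (hc.2 _ (hm.irred_induced_range hB))

theorem IsCompletion.comp {c : V → W} {m : X → V} (hc : A.IsCompletion K c)
    (hm : B.IsEmb A m) : B.IsCompletion K (c ∘ m) :=
  ⟨hc.1, hc.2.1.comp hm.injective,
    ⟨fun r x hx => hc.2.2.1.1 r _ ((hm.unary_iff r x).1 hx),
      fun r x y hxy => hc.2.2.1.2 r _ _ ((hm.rel_iff r x y).1 hxy)⟩,
    fun S hS => hc.2.2.isEmb_comp ((isEmb_induced_val S).comp hm) hS⟩

theorem IsEmb.isCompletion {f : V → W} (hK : K.Irred) (h : A.IsEmb K f) :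
    A.IsCompletion K f :=
  ⟨hK, h.injective, ⟨fun r x => (h.unary_iff r x).1, fun r x y => (h.rel_iff r x y).1⟩,
    fun S _ => (isEmb_induced_val S).comp h⟩

theorem IsCompletion.of_agree {A B : Str L1 L2 V} {f : V → W}
    (hv : ∀ x, A.vertexType x = B.vertexType x)
    (hrel : ∀ r x y, A.Adj x y → (A.rel r x y ↔ B.rel r x y)) (h : B.IsCompletion K f) :
    A.IsCompletion K f := by
  have hle : ∀ r x y, A.rel r x y → B.rel r x y := by
    intro r x y hxy
    obtain rfl | hne := eq_or_ne x y
    · exact (rel_iff_of_vertexType_eq (hv x) r).1 hxy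
    · exact (hrel r x y ⟨hne, r, Or.inl hxy⟩).1 hxy
  have hadj : ∀ x y, A.Adj x y → B.Adj x y := fun x y ⟨hne, r, hr⟩ =>
    ⟨hne, r, hr.imp (hle r x y) (hle r y x)⟩
  refine ⟨h.1, h.2.1, ⟨fun r x hx => h.2.2.1.1 r x ((unary_iff_of_vertexType_eq (hv x) r).1 hx),
    fun r x y hxy => h.2.2.1.2 r x y (hle r x y hxy)⟩, fun S hS => ?_⟩
  have hSA : ∀ x y : S, x ≠ y → A.Adj x y := fun x y hxy =>
    (isEmb_induced_val S).adj_iff.1 (hS x y hxy)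
  have hSB : (B.Induced S).Irred := fun x y hxy =>
    (isEmb_induced_val S).adj_iff.2 (hadj _ _ (hSA x y hxy))
  have hid : (A.Induced S).IsEmb (B.Induced S) id :=
    IsEmb.of_vertexType Function.injective_id (fun x => hv x.1) fun r x y hxy =>
      hrel r x.1 y.1 (hSA x y hxy)
  exact hid.comp (h.2.2.2 S hSB)

theorem isEmb_induced_of_subset {m : X → V} {p : V → W} {S : Set V} (hA : B.IsEmb A m)
    (hK : B.IsEmb K (p ∘ m)) (hS : S ⊆ Set.range m) :
    (A.Induced S).IsEmb K (fun x => p x.1) := by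
  choose φ hφ using fun x : S => hS x.2
  have hφemb : (A.Induced S).IsEmb B φ := by
    refine ⟨fun x y hxy => Subtype.ext ?_, fun r x => ?_, fun r x y => ?_⟩
    · rw [← hφ x, ← hφ y, hxy]
    · exact (hφ x ▸ hA.unary_iff r (φ x)).symm
    · exact (hφ x ▸ hφ y ▸ hA.rel_iff r (φ x) (φ y)).symm
  simpa only [Function.comp_def, hφ] using hφemb.comp hK

theorem exists_isEmb_induced_of_subset [Nonempty X] {m : X → V} {g : X → W} {S : Set V}
    (hA : B.IsEmb A m) (hK : B.IsEmb K g) (hS : S ⊆ Set.range m) :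
    ∃ f : S → W, (A.Induced S).IsEmb K f := by
  refine ⟨_, isEmb_induced_of_subset hA (p := g ∘ Function.invFun m) ?_ hS⟩
  rwa [Function.comp_assoc, Function.invFun_comp hA.injective, Function.comp_id]

theorem smallIrredEmbed_two (hnb : ∀ a, ∃ b, A.Adj a b)
    (hpair : ∀ a b, A.Adj a b → ∃ f : ({a, b} : Set V) → W, (A.Induced {a, b}).IsEmb K f) :
    A.SmallIrredEmbed K 2 := by
  intro S hfin hcard hS
  interval_cases h : S.ncard
  · rw [Set.ncard_eq_zero hfin] at h
    subst h
    exact ⟨fun x => x.2.elim, fun x => x.2.elim, fun _ x => x.2.elim, fun _ x => x.2.elim⟩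
  · obtain ⟨a, rfl⟩ := Set.ncard_eq_one.1 h
    obtain ⟨b, hab⟩ := hnb a
    obtain ⟨f, hf⟩ := hpair a b hab
    have hsub : {a} ⊆ ({a, b} : Set V) := Set.singleton_subset_iff.2 (Set.mem_insert a {b})
    exact ⟨_, (isEmb_induced_inclusion hsub).comp hf⟩
  · obtain ⟨a, b, hne, rfl⟩ := Set.ncard_eq_two.1 h
    have hadj := hS ⟨a, Set.mem_insert a {b}⟩ ⟨b, Set.mem_insert_of_mem a rfl⟩
      (by simpa using hne)
    exact hpair a b ((isEmb_induced_val _).adj_iff.1 hadj)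

end Completion

section Cycles

variable {A : Str L1 L2 V} {ℓ : ℕ} {w : ZMod ℓ → V}

theorem IsInducedCycle.three_le (hw : A.IsInducedCycle ℓ w) : 3 ≤ ℓ := hw.1.1

theorem IsInducedCycle.neZero (hw : A.IsInducedCycle ℓ w) : NeZero ℓ :=
  ⟨by have := hw.three_le; omega⟩

theorem IsInducedCycle.injective (hw : A.IsInducedCycle ℓ w) : Function.Injective w := hw.1.2.1

theorem IsInducedCycle.adj_add_one (hw : A.IsInducedCycle ℓ w) (i : ZMod ℓ) :
    A.Adj (w i) (w (i + 1)) :=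
  hw.1.2.2 i

theorem IsInducedCycle.adj_iff (hw : A.IsInducedCycle ℓ w) {i j : ZMod ℓ} :
    A.Adj (w i) (w j) ↔ j = i + 1 ∨ i = j + 1 := by
  refine ⟨fun h => ?_, ?_⟩
  · by_contra! hne
    exact hw.2 i j (fun hij => h.1 (congrArg w hij)) hne.1 hne.2 h
  · rintro (rfl | rfl)
    exacts [hw.adj_add_one i, (hw.adj_add_one j).symm]

theorem IsInducedCycle.eq_three_of_adj (hw : A.IsInducedCycle ℓ w) (i : ZMod ℓ)
    (h : A.Adj (w i) (w (i + 2))) : ℓ = 3 := by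
  by_contra h3
  have hℓ : 4 ≤ ℓ := by have := hw.three_le; omega
  have h2 : i + 2 ≠ i := by exact_mod_cast i.add_natCast_ne_self (k := 2) (by omega) (by omega)
  have h1 : i + 1 + 1 ≠ i + 1 := by
    exact_mod_cast (i + 1).add_natCast_ne_self (k := 1) (by omega) (by omega)
  have h3 : i + 3 ≠ i := by exact_mod_cast i.add_natCast_ne_self (k := 3) (by omega) (by omega)
  refine hw.2 i (i + 2) h2.symm (by rw [← one_add_one_eq_two, ← add_assoc]; exact h1) ?_ h
  rw [add_assoc, two_add_one_eq_three]
  exact h3.symm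

theorem IsCycle.irred_induced_range {w : ZMod 3 → V} (hc : A.IsCycle 3 w) :
    (A.Induced (Set.range w)).Irred := by
  rintro ⟨_, i, rfl⟩ ⟨_, j, rfl⟩ hne
  have hij : i ≠ j := by rintro rfl; exact hne rfl
  have hcons : ∀ i j : ZMod 3, i ≠ j → j = i + 1 ∨ i = j + 1 := by decide
  refine (isEmb_induced_val _).adj_iff.2 ?_
  rcases hcons i j hij with rfl | rfl
  exacts [hc.2.2 i, (hc.2.2 j).symm]

end Cycles

def comapOn (K : Str L1 L2 W) (pt : V → W) (E : V → V → Prop) : Str L1 L2 V where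
  unary r x := K.unary r (pt x)
  rel r x y := K.rel r (pt x) (pt y) ∧ (x = y ∨ E x y)

section ComapOn

variable {K : Str L1 L2 W} {pt : V → W} {E : V → V → Prop}

theorem comapOn_vertexType (x : V) : (K.comapOn pt E).vertexType x = K.vertexType (pt x) :=
  vertexType_eq_iff.2 ⟨fun _ => Iff.rfl, fun _ => ⟨And.left, fun h => ⟨h, Or.inl rfl⟩⟩⟩

theorem comapOn_rel_iff {r : L2} {x y : V} (h : E x y) :
    (K.comapOn pt E).rel r x y ↔ K.rel r (pt x) (pt y) :=
  ⟨And.left, fun h' => ⟨h', Or.inr h⟩⟩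

theorem edge_of_adj_comapOn (hE : ∀ x y, E x y → E y x) {x y : V}
    (h : (K.comapOn pt E).Adj x y) : E x y := by
  obtain ⟨hne, r, ⟨-, h⟩ | ⟨-, h⟩⟩ := h
  exacts [h.resolve_left hne, hE _ _ (h.resolve_left hne.symm)]

theorem adj_comapOn (hK : K.Irred) (hE : ∀ x y, E x y → E y x)
    (hpt : ∀ x y, x ≠ y → E x y → pt x ≠ pt y) {x y : V} (hne : x ≠ y) (h : E x y) :
    (K.comapOn pt E).Adj x y := by
  obtain ⟨-, r, hr⟩ := hK _ _ (hpt x y hne h)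
  exact ⟨hne, r, hr.imp (fun h' => ⟨h', Or.inr h⟩) (fun h' => ⟨h', Or.inr (hE _ _ h)⟩)⟩

theorem isEmb_comapOn_induced (hE : ∀ x y, E x y → E y x)
    (hpt : ∀ x y, x ≠ y → E x y → pt x ≠ pt y) {S : Set V}
    (hS : ((K.comapOn pt E).Induced S).Irred) :
    ((K.comapOn pt E).Induced S).IsEmb K (fun x => pt x.1) := by
  have hedge : ∀ x y : S, x ≠ y → E x y := fun x y hxy =>
    edge_of_adj_comapOn hE ((isEmb_induced_val S).adj_iff.1 (hS x y hxy))
  refine IsEmb.of_vertexType (fun x y hxy => ?_) (fun x => comapOn_vertexType x.1)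
    (fun r x y hxy => comapOn_rel_iff (hedge x y hxy))
  by_contra hne
  exact hpt x y (Subtype.coe_ne_coe.2 hne) (hedge x y hne) hxy

/-- The induced cycles of `K.comapOn pt E` are triangles embedded by `pt`, so the hypothesis
completes it; that completion is one of `A`, which agrees with `K.comapOn pt E` on vertex types
and along the edges of `A`. -/
theorem exists_isCompletion_of_comapOn [Countable V] (hK : K.Irred) (hyp : CompletionHyp K)
    (hE : ∀ x y, E x y → E y x) (hpt : ∀ x y, x ≠ y → E x y → pt x ≠ pt y)
    (hchordal : ∀ ℓ w, (K.comapOn pt E).IsInducedCycle ℓ w → ℓ = 3) {A : Str L1 L2 V}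
    (hnb : ∀ x, ∃ y, A.Adj x y)
    (hloc : ∀ x y, A.Adj x y → (A.Induced {x, y}).IsEmb K (fun z => pt z.1))
    (hadj : ∀ x y, A.Adj x y → E x y) : ∃ f, A.IsCompletion K f := by
  have hcyc : (K.comapOn pt E).CycleCompletes K := by
    intro ℓ w hw
    obtain rfl := hchordal ℓ w hw
    exact ⟨_, (isEmb_comapOn_induced hE hpt hw.1.irred_induced_range).isCompletion hK⟩
  obtain ⟨f, hf⟩ := hyp V (K.comapOn pt E) hcyc fun S _ _ hS =>
    ⟨_, isEmb_comapOn_induced hE hpt hS⟩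
  refine ⟨f, hf.of_agree (fun x => ?_) (fun r x y hxy => ?_)⟩
  · obtain ⟨y, hxy⟩ := hnb x
    exact ((hloc x y hxy).vertexType_eq ⟨x, Set.mem_insert x {y}⟩).trans
      (comapOn_vertexType x).symm
  · exact ((hloc x y hxy).rel_iff r ⟨x, Set.mem_insert x {y}⟩
      ⟨y, Set.mem_insert_of_mem x rfl⟩).trans (comapOn_rel_iff (hadj x y hxy)).symm

end ComapOn

end Str

open Str

/-! ### Letters and the edges of `G` -/

section Letters

variable {L1 L2 V W : Type} {K : Str L1 L2 W}

theorem Sig.irred (hK : K.Irred) (σ : Sig K) : σ.1.Irred :=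
  σ.2.elim fun _ hf => hf.irred hK

def Sig.comap (K : Str L1 L2 W) (g : Fin 2 → W) (hg : Function.Injective g) : Sig K :=
  ⟨K.comap g, g, isEmb_comap hg⟩

instance [Countable W] : Countable (Sig K) := by
  choose g hg using fun σ : Sig K => σ.2
  refine Function.Injective.countable (f := g) fun σ τ h => Subtype.ext ?_
  rw [(hg σ).eq_comap, (hg τ).eq_comap, h]

instance [Countable W] : Countable (GVert K) :=
  inferInstanceAs (Countable {U : List (Sig K) // U ≠ [] ∧ A1cond U})

theorem IsTri.isEmb {A B C : Str L1 L2 (Fin 2)} {D : Str L1 L2 (Fin 3)} {X : Str L1 L2 V}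
    {x y z : V} (hD : IsTri A B C D) (hA : A.IsEmb X ![x, y]) (hB : B.IsEmb X ![y, z])
    (hC : C.IsEmb X ![x, z]) : D.IsEmb X ![x, y, z] := by
  obtain ⟨hDA, hDB, hDC⟩ := hD
  refine IsEmb.of_vertexType (injective_vec_three (injective_pair_iff_ne.1 hA.injective)
      (injective_pair_iff_ne.1 hC.injective) (injective_pair_iff_ne.1 hB.injective))
    (fun i => ?_) (fun r i j hij => ?_)
  · fin_cases i
    · exact (hDA.vertexType_eq 0).symm.trans (hA.vertexType_eq 0)
    · exact (hDA.vertexType_eq 1).symm.trans (hA.vertexType_eq 1)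
    · exact (hDB.vertexType_eq 1).symm.trans (hB.vertexType_eq 1)
  · fin_cases i <;> fin_cases j <;> try exact absurd rfl hij
    · exact (hDA.rel_iff r 0 1).symm.trans (hA.rel_iff r 0 1)
    · exact (hDC.rel_iff r 0 1).symm.trans (hC.rel_iff r 0 1)
    · exact (hDA.rel_iff r 1 0).symm.trans (hA.rel_iff r 1 0)
    · exact (hDB.rel_iff r 0 1).symm.trans (hB.rel_iff r 0 1)
    · exact (hDC.rel_iff r 1 0).symm.trans (hC.rel_iff r 1 0)
    · exact (hDB.rel_iff r 1 0).symm.trans (hB.rel_iff r 1 0)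

end Letters

section Words

variable {L1 L2 W : Type} {K : Str L1 L2 W} {U V : GVert K}

theorem GVert.length_pos (U : GVert K) : 0 < U.1.length :=
  List.length_pos_iff.2 U.2.1

theorem GVert.vertexType_one_eq (U : GVert K) {i j : ℕ} (hi : i < U.1.length)
    (hj : j < U.1.length) :
    (U.1.get ⟨i, hi⟩).1.vertexType 1 = (U.1.get ⟨j, hj⟩).1.vertexType 1 :=
  vertexType_eq_iff.2 (U.2.2 i j hi hj)

theorem GTri.vertexType_zero_eq_one {h : U.1.length < V.1.length} (hG : GTri K U V h) {i : ℕ}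
    (hi : i < U.1.length) :
    (V.1.get ⟨U.1.length, h⟩).1.vertexType 0 = (U.1.get ⟨i, hi⟩).1.vertexType 1 := by
  obtain ⟨D, ⟨hA, hB, -⟩, -⟩ := hG i hi
  exact (hB.vertexType_eq 0).trans (hA.vertexType_eq 1).symm

theorem GTri.vertexType_zero_eq_zero {h : U.1.length < V.1.length} (hG : GTri K U V h) {i : ℕ}
    (hi : i < U.1.length) :
    (V.1.get ⟨i, hi.trans h⟩).1.vertexType 0 = (U.1.get ⟨i, hi⟩).1.vertexType 0 := by
  obtain ⟨D, ⟨hA, -, hC⟩, -⟩ := hG i hi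
  exact (hC.vertexType_eq 0).trans (hA.vertexType_eq 0).symm

theorem GTri.ne {h : U.1.length < V.1.length} (_ : GTri K U V h) : U ≠ V := by
  rintro rfl
  exact lt_irrefl _ h

theorem Gstr.rel_iff_of_gtri {h : U.1.length < V.1.length} (hG : GTri K U V h) (r : L2) :
    (Gstr K).rel r U V ↔ (V.1.get ⟨U.1.length, h⟩).1.rel r 0 1 := by
  refine ⟨?_, fun hr => Or.inl ⟨h, hG, hr⟩⟩
  rintro (⟨_, -, hr⟩ | ⟨h', -⟩ | ⟨rfl, -⟩)
  exacts [hr, absurd (h.trans h') (lt_irrefl _), absurd h (lt_irrefl _)]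

theorem Gstr.rel_iff_of_gtri' {h : U.1.length < V.1.length} (hG : GTri K U V h) (r : L2) :
    (Gstr K).rel r V U ↔ (V.1.get ⟨U.1.length, h⟩).1.rel r 1 0 := by
  refine ⟨?_, fun hr => Or.inr (Or.inl ⟨h, hG, hr⟩)⟩
  rintro (⟨h', -⟩ | ⟨_, -, hr⟩ | ⟨rfl, -⟩)
  exacts [absurd (h.trans h') (lt_irrefl _), hr, absurd h (lt_irrefl _)]

theorem Gstr.adj_of_gtri (hK : K.Irred) {h : U.1.length < V.1.length} (hG : GTri K U V h) :
    (Gstr K).Adj U V := by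
  obtain ⟨-, r, hr⟩ := (V.1.get ⟨U.1.length, h⟩).irred hK 0 1 (by decide)
  exact ⟨hG.ne, r, hr.imp (Gstr.rel_iff_of_gtri hG r).2 (Gstr.rel_iff_of_gtri' hG r).2⟩

theorem Gstr.exists_gtri_of_adj (hadj : (Gstr K).Adj U V) :
    (∃ h, GTri K U V h) ∨ (∃ h, GTri K V U h) := by
  obtain ⟨hne, r, hr | hr⟩ := hadj
  · rcases hr with ⟨h, hG, -⟩ | ⟨h, hG, -⟩ | ⟨rfl, -⟩
    exacts [Or.inl ⟨h, hG⟩, Or.inr ⟨h, hG⟩, absurd rfl hne]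
  · rcases hr with ⟨h, hG, -⟩ | ⟨h, hG, -⟩ | ⟨rfl, -⟩
    exacts [Or.inr ⟨h, hG⟩, Or.inl ⟨h, hG⟩, absurd rfl hne]

theorem Gstr.length_ne_of_adj (hadj : (Gstr K).Adj U V) : U.1.length ≠ V.1.length := by
  rcases Gstr.exists_gtri_of_adj hadj with ⟨h, -⟩ | ⟨h, -⟩
  exacts [h.ne, h.ne']

theorem Gstr.vertexType_eq (hU : ∃ V, (Gstr K).Adj U V) :
    (Gstr K).vertexType U = (U.1.get ⟨0, U.length_pos⟩).1.vertexType 1 := by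
  obtain ⟨V, hadj⟩ := hU
  set t := (U.1.get ⟨0, U.length_pos⟩).1.vertexType 1
  have hup : ∀ V h, GTri K U V h → (V.1.get ⟨U.1.length, h⟩).1.vertexType 0 = t :=
    fun V h hG => hG.vertexType_zero_eq_one U.length_pos
  have hdown : ∀ (V : GVert K) h, (U.1.get ⟨V.1.length, h⟩).1.vertexType 1 = t :=
    fun V h => U.vertexType_one_eq h U.length_pos
  refine vertexType_eq_iff.2 ⟨fun r => ⟨?_, fun hr => ?_⟩, fun r => ⟨?_, fun hr => ?_⟩⟩
  · rintro (⟨V, h, hG, hr⟩ | ⟨V, h, -, hr⟩)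
    exacts [(unary_iff_of_vertexType_eq (hup V h hG) r).1 hr,
      (unary_iff_of_vertexType_eq (hdown V h) r).1 hr]
  · rcases Gstr.exists_gtri_of_adj hadj with ⟨h, hG⟩ | ⟨h, hG⟩
    exacts [Or.inl ⟨V, h, hG, (unary_iff_of_vertexType_eq (hup V h hG) r).2 hr⟩,
      Or.inr ⟨V, h, hG, (unary_iff_of_vertexType_eq (hdown V h) r).2 hr⟩]
  · rintro (⟨h, -⟩ | ⟨h, -⟩ | ⟨-, ⟨V, h, hG, hr⟩ | ⟨V, h, -, hr⟩⟩)
    exacts [absurd h (lt_irrefl _), absurd h (lt_irrefl _),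
      (rel_iff_of_vertexType_eq (hup V h hG) r).1 hr,
      (rel_iff_of_vertexType_eq (hdown V h) r).1 hr]
  · refine Or.inr (Or.inr ⟨rfl, ?_⟩)
    rcases Gstr.exists_gtri_of_adj hadj with ⟨h, hG⟩ | ⟨h, hG⟩
    exacts [Or.inl ⟨V, h, hG, (rel_iff_of_vertexType_eq (hup V h hG) r).2 hr⟩,
      Or.inr ⟨V, h, hG, (rel_iff_of_vertexType_eq (hdown V h) r).2 hr⟩]

theorem GTri.isEmb_Gstr (hK : K.Irred) {h : U.1.length < V.1.length} (hG : GTri K U V h) :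
    (V.1.get ⟨U.1.length, h⟩).1.IsEmb (Gstr K) ![U, V] := by
  have hadj := Gstr.adj_of_gtri hK hG
  refine IsEmb.of_vertexType (injective_pair_iff_ne.2 hG.ne) (fun i => ?_) (fun r i j hij => ?_)
  · fin_cases i
    · exact (hG.vertexType_zero_eq_one U.length_pos).trans (Gstr.vertexType_eq ⟨V, hadj⟩).symm
    · exact (V.vertexType_one_eq _ V.length_pos).trans (Gstr.vertexType_eq ⟨U, hadj.symm⟩).symm
  · fin_cases i <;> fin_cases j
    · exact absurd rfl hij
    · exact (Gstr.rel_iff_of_gtri hG r).symm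
    · exact (Gstr.rel_iff_of_gtri' hG r).symm
    · exact absurd rfl hij

end Words

section Witnesses

variable {L1 L2 W : Type} {K : Str L1 L2 W}

/-- The free amalgam of `σ` (on `0, 2`) and `τ` (on `1, 2`) over the vertex `2`. -/
def glue (σ τ : Str L1 L2 (Fin 2)) : Str L1 L2 (Fin 3) where
  unary r := ![σ.unary r 0, τ.unary r 0, σ.unary r 1]
  rel r := ![![σ.rel r 0 0, False, σ.rel r 0 1], ![False, τ.rel r 0 0, τ.rel r 0 1],
    ![σ.rel r 1 0, τ.rel r 1 0, σ.rel r 1 1]]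

section Glue

variable {σ τ : Str L1 L2 (Fin 2)}

theorem isEmb_glue_left : σ.IsEmb (glue σ τ) ![0, 2] :=
  ⟨injective_pair_iff_ne.2 (by decide), fun r i => by fin_cases i <;> exact Iff.rfl,
    fun r i j => by fin_cases i <;> fin_cases j <;> exact Iff.rfl⟩

theorem isEmb_glue_right (h : τ.vertexType 1 = σ.vertexType 1) :
    τ.IsEmb (glue σ τ) ![1, 2] := by
  refine ⟨injective_pair_iff_ne.2 (by decide), fun r i => ?_, fun r i j => ?_⟩
  · fin_cases i
    exacts [Iff.rfl, unary_iff_of_vertexType_eq h r]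
  · fin_cases i <;> fin_cases j
    exacts [Iff.rfl, Iff.rfl, Iff.rfl, rel_iff_of_vertexType_eq h r]

theorem not_adj_glue : ¬ (glue σ τ).Adj 0 1 := by
  rintro ⟨-, r, h | h⟩ <;> exact h

theorem glue_cycleCompletes (K : Str L1 L2 W) : (glue σ τ).CycleCompletes K := by
  intro ℓ w hw
  have hℓ : ℓ = 3 := by
    have : NeZero ℓ := ⟨by have := hw.three_le; omega⟩
    have := Fintype.card_le_of_injective w hw.injective
    simp only [ZMod.card, Fintype.card_fin] at this
    have := hw.three_le
    omega
  subst hℓ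
  have hsurj : Function.Surjective w :=
    ((Fintype.bijective_iff_injective_and_card w).2 ⟨hw.injective, by simp⟩).2
  exfalso
  exact not_adj_glue ((isEmb_induced_val _).adj_iff.1
    (hw.1.irred_induced_range ⟨0, hsurj 0⟩ ⟨1, hsurj 1⟩ (by simp [Subtype.ext_iff])))

theorem glue_smallIrredEmbed (hK : K.Irred) (hσ : ∃ g, σ.IsEmb K g) (hτ : ∃ g, τ.IsEmb K g)
    (h : τ.vertexType 1 = σ.vertexType 1) : (glue σ τ).SmallIrredEmbed K 2 := by
  obtain ⟨gσ, hgσ⟩ := hσ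
  obtain ⟨gτ, hgτ⟩ := hτ
  have hσirr := hgσ.irred hK
  have hτirr := hgτ.irred hK
  have h02 : (glue σ τ).Adj 0 2 := isEmb_glue_left.adj_iff.1 (hσirr 0 1 (by decide))
  have h12 : (glue σ τ).Adj 1 2 := (isEmb_glue_right h).adj_iff.1 (hτirr 0 1 (by decide))
  refine smallIrredEmbed_two (fun a => ?_) (fun a b hab => ?_)
  · fin_cases a
    exacts [⟨2, h02⟩, ⟨2, h12⟩, ⟨0, h02.symm⟩]
  · have hl := exists_isEmb_induced_of_subset (S := {a, b}) (isEmb_glue_left (τ := τ)) hgσ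
    have hr := exists_isEmb_induced_of_subset (S := {a, b}) (isEmb_glue_right h) hgτ
    fin_cases a <;> fin_cases b
    exacts [absurd rfl hab.1, absurd hab not_adj_glue, hl pair_subset_range,
      absurd hab.symm not_adj_glue, absurd rfl hab.1, hr pair_subset_range,
      hl pair_subset_range_swap, hr pair_subset_range_swap, absurd rfl hab.1]

end Glue

theorem exists_gtri_of_length_eq_one [Infinite W] {U : GVert K} (hU : U.1.length = 1) :
    ∃ V h, GTri K U V h := by
  classical
  obtain ⟨l, hl⟩ := U
  obtain ⟨σ, rfl⟩ := List.length_eq_one_iff.1 hU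
  obtain ⟨g, hg⟩ := σ.2
  have h01 : g 0 ≠ g 1 := hg.injective.ne (by decide)
  obtain ⟨z, hz⟩ := Infinite.exists_notMem_finset ({g 0, g 1} : Finset W)
  simp only [Finset.mem_insert, Finset.mem_singleton, not_or] at hz
  set c : Fin 3 → W := ![g 0, g 1, z]
  have hc : Function.Injective c := injective_vec_three h01 (Ne.symm hz.1) (Ne.symm hz.2)
  have hcg : c ∘ ![0, 1] = g := by funext i; fin_cases i <;> rfl
  have h02 : Function.Injective (![0, 2] : Fin 2 → Fin 3) := injective_pair_iff_ne.2 (by decide)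
  have h12 : Function.Injective (![1, 2] : Fin 2 → Fin 3) := injective_pair_iff_ne.2 (by decide)
  let V : List (Sig K) := [Sig.comap K _ (hc.comp h02), Sig.comap K _ (hc.comp h12)]
  have hV : ∀ i (hi : i < V.length), (V.get ⟨i, hi⟩).1.vertexType 1 = K.vertexType z := by
    intro i hi
    obtain rfl | rfl : i = 0 ∨ i = 1 := by simp [V] at hi; omega
    all_goals rfl
  refine ⟨⟨V, List.cons_ne_nil _ _, fun i j hi hj =>
    vertexType_eq_iff.1 ((hV i hi).trans (hV j hj).symm)⟩, by simp [V], fun i hi => ?_⟩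
  obtain rfl : i = 0 := by simpa using hi
  exact ⟨K.comap c, ⟨(isEmb_comap_iff hc).2 (hcg ▸ hg), isEmb_comap_comp hc h12,
    isEmb_comap_comp hc h02⟩, c, isEmb_comap hc⟩

theorem exists_gtri_of_two_le_length (hK : K.Irred) (hyp : CompletionHyp K) {U : GVert K}
    (hU : 2 ≤ U.1.length) : ∃ V h, GTri K V U h := by
  set σ := U.1.get ⟨0, U.length_pos⟩
  set τ := U.1.get ⟨1, hU⟩
  have hA1 : τ.1.vertexType 1 = σ.1.vertexType 1 := U.vertexType_one_eq _ _
  obtain ⟨c, -, hc, hhe⟩ := hyp _ (glue σ.1 τ.1) (glue_cycleCompletes K)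
    (glue_smallIrredEmbed hK σ.2 τ.2 hA1)
  have hc01 : Function.Injective (c ∘ ![0, 1]) := hc.comp (injective_pair_iff_ne.2 (by decide))
  refine ⟨⟨[Sig.comap K _ hc01], List.cons_ne_nil _ _, fun i j hi hj => ?_⟩, hU,
    fun i hi => ?_⟩
  · obtain rfl : i = 0 := by simpa using hi
    obtain rfl : j = 0 := by simpa using hj
    exact ⟨fun _ => Iff.rfl, fun _ => Iff.rfl⟩
  · obtain rfl : i = 0 := by simpa using hi
    refine ⟨K.comap c, ⟨isEmb_comap_comp hc (injective_pair_iff_ne.2 (by decide)), ?_, ?_⟩,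
      c, isEmb_comap hc⟩
    · exact (isEmb_comap_iff hc).2 (hhe.isEmb_comp (isEmb_glue_right hA1) (τ.irred hK))
    · exact (isEmb_comap_iff hc).2 (hhe.isEmb_comp isEmb_glue_left (σ.irred hK))

theorem Gstr.exists_adj [Infinite W] (hK : K.Irred) (hyp : CompletionHyp K) (U : GVert K) :
    ∃ V, (Gstr K).Adj U V := by
  rcases Nat.lt_or_ge U.1.length 2 with h | h
  · obtain ⟨V, _, hG⟩ := exists_gtri_of_length_eq_one (U := U) (by have := U.length_pos; omega)
    exact ⟨V, Gstr.adj_of_gtri hK hG⟩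
  · obtain ⟨V, _, hG⟩ := exists_gtri_of_two_le_length hK hyp h
    exact ⟨V, (Gstr.adj_of_gtri hK hG).symm⟩

theorem Gstr.smallIrredEmbed [Infinite W] (hK : K.Irred) (hyp : CompletionHyp K) :
    (Gstr K).SmallIrredEmbed K 2 := by
  refine smallIrredEmbed_two (Gstr.exists_adj hK hyp) fun U V hadj => ?_
  rcases Gstr.exists_gtri_of_adj hadj with ⟨h, hG⟩ | ⟨h, hG⟩
  · obtain ⟨g, hg⟩ := (V.1.get ⟨U.1.length, h⟩).2
    exact exists_isEmb_induced_of_subset (hG.isEmb_Gstr hK) hg pair_subset_range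
  · obtain ⟨g, hg⟩ := (U.1.get ⟨V.1.length, h⟩).2
    exact exists_isEmb_induced_of_subset (hG.isEmb_Gstr hK) hg pair_subset_range_swap

end Witnesses

/-! ### Induced cycles of `G` -/

section Cycles

variable {L1 L2 W : Type} {K : Str L1 L2 W}

/-- For `n ≤ |U|`, the type of the vertices of length `n` adjacent to `U`. -/
def levelType (K : Str L1 L2 W) (n : ℕ) (U : GVert K) : (L1 → Prop) × (L2 → Prop) :=
  if h : n < U.1.length then (U.1.get ⟨n, h⟩).1.vertexType 0 else (Gstr K).vertexType U

theorem levelType_eq_of_gtri (hK : K.Irred) {U V : GVert K} {h : U.1.length < V.1.length}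
    (hG : GTri K U V h) {n : ℕ} (hn : n ≤ U.1.length) : levelType K n U = levelType K n V := by
  unfold levelType
  rw [dif_pos (hn.trans_lt h)]
  split_ifs with hnU
  · exact (hG.vertexType_zero_eq_zero hnU).symm
  · obtain rfl : n = U.1.length := le_antisymm hn (not_lt.1 hnU)
    exact (Gstr.vertexType_eq ⟨V, Gstr.adj_of_gtri hK hG⟩).trans
      (hG.vertexType_zero_eq_one U.length_pos).symm

theorem levelType_eq_of_adj (hK : K.Irred) {U V : GVert K} (hadj : (Gstr K).Adj U V) {n : ℕ}
    (hU : n ≤ U.1.length) (hV : n ≤ V.1.length) : levelType K n U = levelType K n V := by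
  rcases Gstr.exists_gtri_of_adj hadj with ⟨h, hG⟩ | ⟨h, hG⟩
  exacts [levelType_eq_of_gtri hK hG hU, (levelType_eq_of_gtri hK hG hV).symm]

variable {ℓ : ℕ} {v : ZMod ℓ → GVert K} {j0 : ZMod ℓ}

theorem vertexType_letter_of_isInducedCycle (hK : K.Irred) (hv : (Gstr K).IsInducedCycle ℓ v)
    (hj0 : ∀ j, (v j0).1.length ≤ (v j).1.length) {j : ZMod ℓ}
    (h : (v j0).1.length < (v j).1.length) :
    ((v j).1.get ⟨(v j0).1.length, h⟩).1.vertexType 0 = (Gstr K).vertexType (v j0) := by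
  have := hv.neZero
  have hconst := ZMod.eq_of_apply_add_one_eq (f := fun j => levelType K (v j0).1.length (v j))
    (fun j => (levelType_eq_of_adj hK (hv.adj_add_one j) (hj0 j) (hj0 (j + 1))).symm) j j0
  simpa [levelType, h] using hconst

abbrev LongIdx (v : ZMod ℓ → GVert K) (j0 : ZMod ℓ) :=
  {j : ZMod ℓ // (v j0).1.length < (v j).1.length}

/-- The cycle `v` with its shortest vertices merged into `none`, which is joined to each longer
`v j` by the letter of `v j` at position `|v j0|`. -/
def collapse (v : ZMod ℓ → GVert K) (j0 : ZMod ℓ) : Str L1 L2 (Option (LongIdx v j0)) where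
  unary r x := (Gstr K).unary r (v (x.elim j0 Subtype.val))
  rel r
    | none, none => (Gstr K).rel r (v j0) (v j0)
    | none, some j => ((v j.1).1.get ⟨_, j.2⟩).1.rel r 0 1
    | some j, none => ((v j.1).1.get ⟨_, j.2⟩).1.rel r 1 0
    | some j, some j' => (Gstr K).rel r (v j.1) (v j'.1)

def node (v : ZMod ℓ → GVert K) (j0 j : ZMod ℓ) : Option (LongIdx v j0) :=
  if h : (v j0).1.length < (v j).1.length then some ⟨j, h⟩ else none

theorem isEmb_collapse_some {σ : Str L1 L2 (Fin 2)} {p q : LongIdx v j0}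
    (h : σ.IsEmb (Gstr K) ![v p.1, v q.1]) : σ.IsEmb (collapse v j0) ![some p, some q] := by
  have hpq : p ≠ q := by
    rintro rfl
    exact h.injective.ne (by decide : (0 : Fin 2) ≠ 1) rfl
  refine ⟨injective_pair_iff_ne.2 ((Option.some_injective _).ne hpq), fun r i => ?_,
    fun r i j => ?_⟩
  · fin_cases i
    exacts [h.unary_iff r 0, h.unary_iff r 1]
  · fin_cases i <;> fin_cases j
    exacts [h.rel_iff r 0 0, h.rel_iff r 0 1, h.rel_iff r 1 0, h.rel_iff r 1 1]

theorem isEmb_collapse_none (hK : K.Irred) (hv : (Gstr K).IsInducedCycle ℓ v)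
    (hj0 : ∀ j, (v j0).1.length ≤ (v j).1.length) (j : LongIdx v j0) :
    ((v j.1).1.get ⟨_, j.2⟩).1.IsEmb (collapse v j0) ![none, some j] := by
  refine IsEmb.of_vertexType (injective_pair_iff_ne.2 (Option.some_ne_none j).symm) (fun i => ?_)
    (fun r i i' hii' => ?_)
  · fin_cases i
    · exact vertexType_letter_of_isInducedCycle hK hv hj0 j.2
    · exact ((v j.1).vertexType_one_eq _ (v j.1).length_pos).trans
        (Gstr.vertexType_eq ⟨_, hv.adj_add_one j.1⟩).symm
  · fin_cases i <;> fin_cases i'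
    exacts [absurd rfl hii', Iff.rfl, Iff.rfl, absurd rfl hii']

theorem adj_of_adj_collapse (hv : (Gstr K).IsInducedCycle ℓ v) {p q : LongIdx v j0}
    (h : (collapse v j0).Adj (some p) (some q)) : (Gstr K).Adj (v p.1) (v q.1) :=
  ⟨fun hpq => h.1 (congrArg some (Subtype.ext (hv.injective hpq))), h.2⟩

theorem exists_isEmb_collapse_triangle (hK : K.Irred) (hv : (Gstr K).IsInducedCycle ℓ v)
    (hj0 : ∀ j, (v j0).1.length ≤ (v j).1.length) {p q : LongIdx v j0}
    {h : (v p.1).1.length < (v q.1).1.length} (hG : GTri K (v p.1) (v q.1) h) :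
    ∃ D : Str L1 L2 (Fin 3), D.IsEmb (collapse v j0) ![none, some p, some q] ∧
      ∃ f, D.IsEmb K f := by
  obtain ⟨D, hD, hDK⟩ := hG _ p.2
  exact ⟨D, hD.isEmb (isEmb_collapse_none hK hv hj0 p)
    (isEmb_collapse_some (hG.isEmb_Gstr hK)) (isEmb_collapse_none hK hv hj0 q), hDK⟩

theorem collapse_adj_none (hK : K.Irred) (hv : (Gstr K).IsInducedCycle ℓ v)
    (hj0 : ∀ j, (v j0).1.length ≤ (v j).1.length) (j : LongIdx v j0) :
    (collapse v j0).Adj none (some j) :=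
  (isEmb_collapse_none hK hv hj0 j).adj_iff.1 ((Sig.irred hK _) 0 1 (by decide))

theorem collapse_smallIrredEmbed (hK : K.Irred) (hv : (Gstr K).IsInducedCycle ℓ v)
    (hj0 : ∀ j, (v j0).1.length ≤ (v j).1.length) : (collapse v j0).SmallIrredEmbed K 2 := by
  have hnone := collapse_adj_none hK hv hj0
  have hlong : (v j0).1.length < (v (j0 + 1)).1.length :=
    lt_of_le_of_ne (hj0 _) (Gstr.length_ne_of_adj (hv.adj_add_one j0))
  refine smallIrredEmbed_two (fun a => ?_) (fun a b hab => ?_)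
  · cases a
    exacts [⟨_, hnone ⟨_, hlong⟩⟩, ⟨_, (hnone _).symm⟩]
  rcases a with _ | p <;> rcases b with _ | q
  · exact absurd rfl hab.1
  · obtain ⟨g, hg⟩ := ((v q.1).1.get ⟨_, q.2⟩).2
    exact exists_isEmb_induced_of_subset (isEmb_collapse_none hK hv hj0 q) hg pair_subset_range
  · obtain ⟨g, hg⟩ := ((v p.1).1.get ⟨_, p.2⟩).2
    exact exists_isEmb_induced_of_subset (isEmb_collapse_none hK hv hj0 p) hg
      pair_subset_range_swap
  · rcases Gstr.exists_gtri_of_adj (adj_of_adj_collapse hv hab) with ⟨h, hG⟩ | ⟨h, hG⟩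
    · obtain ⟨g, hg⟩ := ((v q.1).1.get ⟨_, h⟩).2
      exact exists_isEmb_induced_of_subset (isEmb_collapse_some (hG.isEmb_Gstr hK)) hg
        pair_subset_range
    · obtain ⟨g, hg⟩ := ((v p.1).1.get ⟨_, h⟩).2
      exact exists_isEmb_induced_of_subset (isEmb_collapse_some (hG.isEmb_Gstr hK)) hg
        pair_subset_range_swap

theorem exists_eq_none_of_isInducedCycle_collapse (hv : (Gstr K).IsInducedCycle ℓ v)
    {ℓ' : ℕ} {w : ZMod ℓ' → Option (LongIdx v j0)}
    (hw : (collapse v j0).IsInducedCycle ℓ' w) :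
    ∃ i, w i = none := by
  have := hv.neZero
  by_contra! hnone
  choose jf hjf using fun t => Option.ne_none_iff_exists'.1 (hnone t)
  have hinj : Function.Injective fun t => (jf t).1 := fun s t hst =>
    hw.injective (by rw [hjf s, hjf t, Subtype.ext hst])
  have hstep : ∀ t, (jf (t + 1)).1 = (jf t).1 + 1 ∨ (jf t).1 = (jf (t + 1)).1 + 1 := by
    intro t
    have hadj := hw.adj_add_one t
    rw [hjf t, hjf (t + 1)] at hadj
    exact hv.adj_iff.1 (adj_of_adj_collapse hv hadj)
  obtain ⟨t, ht⟩ := ZMod.surjective_of_injective_of_step hw.three_le hinj hstep j0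
  have hlong := (jf t).2
  rw [show (jf t).1 = j0 from ht] at hlong
  exact lt_irrefl _ hlong

theorem collapse_cycleCompletes (hK : K.Irred) (hv : (Gstr K).IsInducedCycle ℓ v)
    (hj0 : ∀ j, (v j0).1.length ≤ (v j).1.length) : (collapse v j0).CycleCompletes K := by
  intro ℓ' w hw
  obtain ⟨i, hi⟩ := exists_eq_none_of_isInducedCycle_collapse hv hw
  have hne : ∀ k : ℕ, 0 < k → k < ℓ' → w (i + k) ≠ none := fun k hk hkℓ h =>
    i.add_natCast_ne_self hk hkℓ (hw.injective (h.trans hi.symm))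
  obtain ⟨a, ha⟩ := Option.ne_none_iff_exists'.1 (hne 1 one_pos (by have := hw.three_le; omega))
  obtain ⟨b, hb⟩ := Option.ne_none_iff_exists'.1 (hne 2 two_pos (by have := hw.three_le; omega))
  push_cast at ha hb
  obtain rfl : ℓ' = 3 :=
    hw.eq_three_of_adj i (by rw [hi, hb]; exact collapse_adj_none hK hv hj0 b)
  have hab : (Gstr K).Adj (v a.1) (v b.1) := adj_of_adj_collapse hv (by
    rw [← ha, ← hb, ← one_add_one_eq_two, ← add_assoc]
    exact hw.adj_add_one (i + 1))
  have hrange : Set.range w ⊆ {none, some a, some b} := by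
    rintro _ ⟨t, rfl⟩
    have h3 : ∀ t i : ZMod 3, t = i ∨ t = i + 1 ∨ t = i + 2 := by decide
    rcases h3 t i with rfl | rfl | rfl <;> simp [hi, ha, hb]
  suffices ∃ D : Str L1 L2 (Fin 3), ∃ m : Fin 3 → Option (LongIdx v j0),
      D.IsEmb (collapse v j0) m ∧ (∃ f, D.IsEmb K f) ∧ Set.range w ⊆ Set.range m by
    obtain ⟨D, m, hD, ⟨f, hf⟩, hsub⟩ := this
    obtain ⟨f', hf'⟩ := exists_isEmb_induced_of_subset hD hf hsub
    exact ⟨f', hf'.isCompletion hK⟩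
  rcases Gstr.exists_gtri_of_adj hab with ⟨h, hG⟩ | ⟨h, hG⟩
  · obtain ⟨D, hD, hDK⟩ := exists_isEmb_collapse_triangle hK hv hj0 hG
    exact ⟨D, _, hD, hDK, hrange.trans triple_subset_range⟩
  · obtain ⟨D, hD, hDK⟩ := exists_isEmb_collapse_triangle hK hv hj0 hG
    rw [Set.pair_comm] at hrange
    exact ⟨D, _, hD, hDK, hrange.trans triple_subset_range⟩

theorem node_of_lt {j : ZMod ℓ} (h : (v j0).1.length < (v j).1.length) :
    node v j0 j = some ⟨j, h⟩ :=
  dif_pos h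

theorem node_of_not_lt {j : ZMod ℓ} (h : ¬ (v j0).1.length < (v j).1.length) :
    node v j0 j = none :=
  dif_neg h

theorem not_lt_of_node_eq {a b : ZMod ℓ} (h : node v j0 a = node v j0 b) (hab : a ≠ b) :
    ¬ (v j0).1.length < (v a).1.length ∧ ¬ (v j0).1.length < (v b).1.length := by
  unfold node at h
  split_ifs at h with ha hb hb
  · exact absurd (congrArg Subtype.val (Option.some_injective _ h)) hab
  all_goals simp_all

theorem isEmb_collapse_node (hK : K.Irred) (hv : (Gstr K).IsInducedCycle ℓ v)
    (hj0 : ∀ j, (v j0).1.length ≤ (v j).1.length) {a b : ZMod ℓ}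
    {h : (v a).1.length < (v b).1.length} (hG : GTri K (v a) (v b) h) :
    ((v b).1.get ⟨_, h⟩).1.IsEmb (collapse v j0) (node v j0 ∘ ![a, b]) := by
  have hb : (v j0).1.length < (v b).1.length := (hj0 a).trans_lt h
  rw [comp_vec_two, node_of_lt hb]
  by_cases ha : (v j0).1.length < (v a).1.length
  · rw [node_of_lt ha]
    exact isEmb_collapse_some (hG.isEmb_Gstr hK)
  · rw [node_of_not_lt ha]
    have hlen : (⟨(v a).1.length, h⟩ : Fin (v b).1.length) = ⟨(v j0).1.length, hb⟩ :=
      Fin.ext (le_antisymm (not_lt.1 ha) (hj0 a))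
    rw [hlen]
    exact isEmb_collapse_none hK hv hj0 ⟨b, hb⟩

def fillIn (v : ZMod ℓ → GVert K) (j0 a b : ZMod ℓ) : Prop :=
  b = a + 1 ∨ a = b + 1 ∨ (v j0).1.length < (v a).1.length ∧ (v j0).1.length < (v b).1.length

theorem fillIn_symm (a b : ZMod ℓ) : fillIn v j0 a b → fillIn v j0 b a := by
  rintro (h | h | ⟨ha, hb⟩)
  exacts [Or.inr (Or.inl h), Or.inl h, Or.inr (Or.inr ⟨hb, ha⟩)]

theorem lt_of_fillIn (hv : (Gstr K).IsInducedCycle ℓ v)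
    (hj0 : ∀ j, (v j0).1.length ≤ (v j).1.length) {a b : ZMod ℓ} (h : fillIn v j0 a b)
    (ha : ¬ (v j0).1.length < (v a).1.length) : (v j0).1.length < (v b).1.length := by
  have hlen : ∀ a b, (Gstr K).Adj (v a) (v b) → ¬ (v j0).1.length < (v a).1.length →
      (v j0).1.length < (v b).1.length := fun a b hadj ha =>
    have := Gstr.length_ne_of_adj hadj
    have := hj0 a
    have := hj0 b
    by omega
  rcases h with h | h | ⟨h, -⟩
  exacts [hlen a b (hv.adj_iff.2 (Or.inl h)) ha, hlen a b (hv.adj_iff.2 (Or.inr h)) ha,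
    absurd h ha]

theorem node_ne_of_fillIn (hv : (Gstr K).IsInducedCycle ℓ v)
    (hj0 : ∀ j, (v j0).1.length ≤ (v j).1.length) {a b : ZMod ℓ} (hab : a ≠ b)
    (h : fillIn v j0 a b) : node v j0 a ≠ node v j0 b := fun he =>
  (not_lt_of_node_eq he hab).2 (lt_of_fillIn hv hj0 h (not_lt_of_node_eq he hab).1)

theorem fillIn_chordal (hK : K.Irred) (hv : (Gstr K).IsInducedCycle ℓ v)
    (hj0 : ∀ j, (v j0).1.length ≤ (v j).1.length) {pt : ZMod ℓ → W}
    (hpt : ∀ a b, a ≠ b → fillIn v j0 a b → pt a ≠ pt b) {ℓ' : ℕ}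
    {w : ZMod ℓ' → ZMod ℓ} (hw : (K.comapOn pt (fillIn v j0)).IsInducedCycle ℓ' w) :
    ℓ' = 3 := by
  have hchord : ∀ s t, w s ≠ w t → (v j0).1.length < (v (w s)).1.length →
      (v j0).1.length < (v (w t)).1.length → (K.comapOn pt (fillIn v j0)).Adj (w s) (w t) :=
    fun _ _ hne hs ht => adj_comapOn hK fillIn_symm hpt hne (Or.inr (Or.inr ⟨hs, ht⟩))
  have hne2 : ∀ t, w t ≠ w (t + 2) := fun t h =>
    t.add_natCast_ne_self (k := 2) two_pos (by have := hw.three_le; omega)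
      (by exact_mod_cast (hw.injective h).symm)
  by_cases hshort : ∃ t, ¬ (v j0).1.length < (v (w t)).1.length
  · -- the two neighbours of a shortest vertex are longer, hence joined by a chord
    obtain ⟨t, ht⟩ := hshort
    have hnext := lt_of_fillIn hv hj0 (edge_of_adj_comapOn fillIn_symm (hw.adj_add_one t)) ht
    have hprev := hw.adj_add_one (t - 1)
    rw [sub_add_cancel] at hprev
    replace hprev := lt_of_fillIn hv hj0 (edge_of_adj_comapOn fillIn_symm hprev.symm) ht
    have e : t - 1 + 2 = t + 1 := by ring
    refine hw.eq_three_of_adj (t - 1) ?_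
    rw [e]
    exact hchord _ _ (e ▸ hne2 (t - 1)) hprev hnext
  · push Not at hshort
    exact hw.eq_three_of_adj 0 (hchord _ _ (hne2 0) (hshort 0) (hshort _))

theorem isEmb_induced_pair_of_adj (hK : K.Irred) (hv : (Gstr K).IsInducedCycle ℓ v)
    (hj0 : ∀ j, (v j0).1.length ≤ (v j).1.length) {c : Option (LongIdx v j0) → W}
    (hc : (collapse v j0).IsHomEmb K c) {a b : ZMod ℓ} (hab : ((Gstr K).comap v).Adj a b) :
    (((Gstr K).comap v).Induced {a, b}).IsEmb K (fun z => (c ∘ node v j0) z.1) := by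
  have hcomap : ∀ {a b : ZMod ℓ} {h : (v a).1.length < (v b).1.length},
      GTri K (v a) (v b) h → ((v b).1.get ⟨_, h⟩).1.IsEmb ((Gstr K).comap v) ![a, b] :=
    fun hG => (isEmb_comap_iff hv.injective).2 (by rw [comp_vec_two]; exact hG.isEmb_Gstr hK)
  rcases Gstr.exists_gtri_of_adj ((isEmb_comap hv.injective).adj_iff.1 hab)
    with ⟨h, hG⟩ | ⟨h, hG⟩
  · exact isEmb_induced_of_subset (hcomap hG)
      (hc.isEmb_comp (isEmb_collapse_node hK hv hj0 hG) (Sig.irred hK _)) pair_subset_range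
  · exact isEmb_induced_of_subset (hcomap hG)
      (hc.isEmb_comp (isEmb_collapse_node hK hv hj0 hG) (Sig.irred hK _))
      pair_subset_range_swap

theorem Gstr.cycleCompletes (hK : K.Irred) (hyp : CompletionHyp K) :
    (Gstr K).CycleCompletes K := by
  intro ℓ v hv
  have := hv.neZero
  obtain ⟨j0, -, hj0⟩ := Finset.exists_min_image Finset.univ (fun j => (v j).1.length)
    Finset.univ_nonempty
  replace hj0 := fun j => hj0 j (Finset.mem_univ j)
  obtain ⟨c, -, hc, hce⟩ := hyp _ (collapse v j0) (collapse_cycleCompletes hK hv hj0)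
    (collapse_smallIrredEmbed hK hv hj0)
  have hpt : ∀ a b, a ≠ b → fillIn v j0 a b → (c ∘ node v j0) a ≠ (c ∘ node v j0) b :=
    fun a b hab h => hc.ne (node_ne_of_fillIn hv hj0 hab h)
  obtain ⟨F, hF⟩ := exists_isCompletion_of_comapOn (A := (Gstr K).comap v) hK hyp
    fillIn_symm hpt (fun _ _ => fillIn_chordal hK hv hj0 hpt)
    (fun a => ⟨a + 1, (isEmb_comap hv.injective).adj_iff.2 (hv.adj_add_one a)⟩)
    (fun a b => isEmb_induced_pair_of_adj hK hv hj0 hce)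
    (fun a b hab => (hv.adj_iff.1 ((isEmb_comap hv.injective).adj_iff.1 hab)).elim Or.inl
      (Or.inr ∘ Or.inl))
  exact ⟨_, hF.comp (isEmb_induced_range_symm hv.injective)⟩

end Cycles

theorem G_has_completion_general {L1 L2 WK : Type}
    [Countable WK] [Infinite WK]
    (K : Str L1 L2 WK) (hK : K.Irred) (hyp : CompletionHyp K) :
    ∃ c : GVert K → WK, (Gstr K).IsCompletion K c :=
  hyp (GVert K) (Gstr K) (Gstr.cycleCompletes hK hyp) (Gstr.smallIrredEmbed hK hyp)

/-- There exists a completion `c : G → K`, i.e. an injective homomorphism-embedding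
from the word structure `G` into `K`. -/
theorem G_has_completion {L1 L2 WK : Type} [Finite L1] [Finite L2]
    [Countable WK] [Infinite WK]
    (K : Str L1 L2 WK) (hK : K.Irred) (hyp : CompletionHyp K) :
    ∃ c : GVert K → WK, (Gstr K).IsCompletion K c :=
  G_has_completion_general K hK hyp
end

section
/- Let S be a finite set of positive reals closed under the operation a ⊕ b = min(a+b, max S) (so that (S, ⊕) is well-defined). If every induced cycle of a countable S-edge-labelled complete-graph-partial structure A (i.e., a structure where some pairs are assigned distances from S) satisfies the metric (polygon) inequality, and every one- and two-element substructure of A is an S-metric space, then A can be completed to an S-metric space: there is an assignment of distances from S to all unassigned pairs making A a metric space with distances in S. -/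
/-!
For `x ≠ y` the completion `D x y` is the shortest-walk distance truncated at `M = max S`.
Closure of `S` under `a ⊕ b = min (a + b) M` puts every truncated walk weight into `S`, and
concatenating walks gives the triangle inequality. An assigned distance `p x y = c` survives
because no walk from `x` to `y` is lighter than `c`: by induction on its length, a walk with a
repeated vertex or with a chord other than `xy` can be shortcut without getting heavier (the chord
is no heavier than the segment it bypasses, again by induction), and a walk with neither closes up
with `xy` into an induced cycle, where the polygon inequality applies.
-/

open Finset

theorem ZMod.val_add_one_eq_ite {n : ℕ} (i : ZMod (n + 1)) :
    (i + 1).val = if i.val = n then 0 else i.val + 1 := by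
  have hi : i.val < n + 1 := i.val_lt
  rw [ZMod.val_add, ZMod.val_one_eq_one_mod]
  rcases Nat.eq_zero_or_pos n with rfl | hn
  · rw [if_pos (by omega), Nat.mod_one]
  rw [Nat.mod_eq_of_lt (by omega : 1 < n + 1)]
  split_ifs with h
  · simp [h]
  · exact Nat.mod_eq_of_lt (by omega)

namespace PartialSMetric

variable {V : Type*}

/-- The assigned distance, with the junk value `0` on unassigned pairs. -/
noncomputable def edgeWeight (p : V → V → Option ℝ) (a b : V) : ℝ := (p a b).getD 0

/-- A walk `vert 0, …, vert length` along assigned pairs; `vert` beyond `length` is irrelevant. -/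
structure Walk (p : V → V → Option ℝ) (x y : V) where
  length : ℕ
  vert : ℕ → V
  vert_zero : vert 0 = x
  vert_length : vert length = y
  adj : ∀ i < length, (p (vert i) (vert (i + 1))).isSome

def PolygonInequality (p : V → V → Option ℝ) : Prop :=
  ∀ (ℓ : ℕ) (v : ZMod ℓ → V) (dd : ZMod ℓ → ℝ),
    3 ≤ ℓ → Function.Injective v →
    (∀ i, p (v i) (v (i + 1)) = some (dd i)) →
    (∀ i j : ZMod ℓ, i ≠ j → j ≠ i + 1 → i ≠ j + 1 → p (v i) (v j) = none) →
    ∀ i : ℕ, i < ℓ → dd (i : ZMod ℓ) ≤ ∑ j ∈ (range ℓ).erase i, dd (j : ZMod ℓ)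

variable {p : V → V → Option ℝ} {a b : V}

theorem edgeWeight_of_eq_some {c : ℝ} (h : p a b = some c) : edgeWeight p a b = c := by
  simp [edgeWeight, h]

theorem eq_some_edgeWeight (h : (p a b).isSome) : p a b = some (edgeWeight p a b) := by
  obtain ⟨c, hc⟩ := Option.isSome_iff_exists.mp h
  rw [hc, edgeWeight_of_eq_some hc]

theorem edgeWeight_comm (hsym : ∀ a b, p a b = p b a) (a b : V) :
    edgeWeight p a b = edgeWeight p b a := by
  rw [edgeWeight, hsym]; rfl

theorem edgeWeight_nonneg (hnn : ∀ a b c, p a b = some c → 0 ≤ c) (a b : V) :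
    0 ≤ edgeWeight p a b := by
  cases h : p a b with
  | none => simp [edgeWeight, h]
  | some c => rw [edgeWeight_of_eq_some h]; exact hnn a b c h

namespace Walk

variable {x y z : V}

noncomputable def weight (w : Walk p x y) : ℝ :=
  ∑ i ∈ range w.length, edgeWeight p (w.vert i) (w.vert (i + 1))

def copy {x' y' : V} (w : Walk p x y) (hx : x = x') (hy : y = y') : Walk p x' y' :=
  ⟨w.length, w.vert, hx ▸ w.vert_zero, hy ▸ w.vert_length, w.adj⟩

def nil (x : V) : Walk p x x := ⟨0, fun _ => x, rfl, rfl, by simp⟩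

def single (h : (p x y).isSome) : Walk p x y :=
  ⟨1, fun k => if k = 0 then x else y, rfl, rfl, by simpa using h⟩

def append (w₁ : Walk p x y) (w₂ : Walk p y z) : Walk p x z where
  length := w₁.length + w₂.length
  vert k := if k ≤ w₁.length then w₁.vert k else w₂.vert (k - w₁.length)
  vert_zero := by simp [w₁.vert_zero]
  vert_length := by
    rcases Nat.eq_zero_or_pos w₂.length with h | h
    · simp [h, w₁.vert_length, ← w₂.vert_length, w₂.vert_zero]
    · simp [show ¬ w₁.length + w₂.length ≤ w₁.length by omega, w₂.vert_length]
  adj i hi := by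
    rcases lt_or_ge i w₁.length with h | h
    · simp only [h.le, if_true, show i + 1 ≤ w₁.length by omega]
      exact w₁.adj i h
    · have h' : ¬ i + 1 ≤ w₁.length := by omega
      have key := w₂.adj (i - w₁.length) (by omega)
      rw [show i - w₁.length + 1 = i + 1 - w₁.length by omega] at key
      rcases h.eq_or_lt with rfl | h
      · simpa [h', w₁.vert_length, ← w₂.vert_zero] using key
      · simpa [show ¬ i ≤ w₁.length by omega, h'] using key

def reverse (hsym : ∀ a b, p a b = p b a) (w : Walk p x y) : Walk p y x where
  length := w.length
  vert k := w.vert (w.length - k)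
  vert_zero := by simp [w.vert_length]
  vert_length := by simp [w.vert_zero]
  adj i hi := by
    have h := w.adj (w.length - (i + 1)) (by omega)
    rwa [show w.length - (i + 1) + 1 = w.length - i by omega, hsym] at h

def slice (w : Walk p x y) (s t : ℕ) (hst : s ≤ t) (ht : t ≤ w.length) :
    Walk p (w.vert s) (w.vert t) where
  length := t - s
  vert k := w.vert (s + k)
  vert_zero := by simp
  vert_length := by rw [Nat.add_sub_cancel' hst]
  adj i hi := w.adj (s + i) (by omega)

theorem weight_copy {x' y' : V} (w : Walk p x y) (hx : x = x') (hy : y = y') :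
    (w.copy hx hy).weight = w.weight := rfl

theorem weight_nil : (nil x : Walk p x x).weight = 0 := by simp [weight, nil]

theorem weight_single (h : (p x y).isSome) : (single h).weight = edgeWeight p x y := by
  simp [weight, single]

theorem weight_append (w₁ : Walk p x y) (w₂ : Walk p y z) :
    (w₁.append w₂).weight = w₁.weight + w₂.weight := by
  simp only [weight, append, sum_range_add]
  congr 1
  · refine sum_congr rfl fun i hi => ?_
    have hi := mem_range.mp hi
    simp [hi.le, show i + 1 ≤ w₁.length by omega]
  · refine sum_congr rfl fun i _ => ?_
    rcases Nat.eq_zero_or_pos i with rfl | hi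
    · simp [w₁.vert_length, w₂.vert_zero, show ¬ w₁.length + 1 ≤ w₁.length by omega]
    · simp [show ¬ w₁.length + i ≤ w₁.length by omega, Nat.add_assoc]

theorem weight_reverse (hsym : ∀ a b, p a b = p b a) (w : Walk p x y) :
    (w.reverse hsym).weight = w.weight := by
  rw [weight, weight, ← sum_range_reflect]
  refine sum_congr rfl fun i hi => ?_
  have hi := mem_range.mp hi
  simp only [reverse]
  rw [edgeWeight_comm hsym, show w.length - (w.length - 1 - i) = i + 1 by omega,
    show w.length - (w.length - 1 - i + 1) = i by omega]

theorem weight_slice (w : Walk p x y) (s t : ℕ) (hst : s ≤ t) (ht : t ≤ w.length) :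
    (w.slice s t hst ht).weight = ∑ i ∈ Ico s t, edgeWeight p (w.vert i) (w.vert (i + 1)) := by
  simp [weight, slice, sum_Ico_eq_sum_range, Nat.add_assoc]

theorem weight_nonneg (hnn : ∀ a b, 0 ≤ edgeWeight p a b) (w : Walk p x y) : 0 ≤ w.weight :=
  sum_nonneg fun _ _ => hnn _ _

theorem exists_shorter_of_shortcut (w : Walk p x y) {s t : ℕ} (hst : s ≤ t) (ht : t ≤ w.length)
    (u : Walk p (w.vert s) (w.vert t)) (hlen : u.length < t - s)
    (hle : u.weight ≤ (w.slice s t hst ht).weight) :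
    ∃ w' : Walk p x y, w'.length < w.length ∧ w'.weight ≤ w.weight := by
  let pre := w.slice 0 s (Nat.zero_le s) (hst.trans ht)
  let post := w.slice t w.length ht le_rfl
  refine ⟨((pre.append u).append post).copy w.vert_zero w.vert_length, ?_, ?_⟩
  · simp only [copy, append, pre, post, slice]
    omega
  · have hsplit : w.weight = pre.weight + (w.slice s t hst ht).weight + post.weight := by
      rw [weight_slice, weight_slice, weight_slice, sum_Ico_consecutive _ (Nat.zero_le s) hst,
        sum_Ico_consecutive _ (Nat.zero_le t) ht, weight, range_eq_Ico]
    rw [weight_copy, weight_append, weight_append, hsplit]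
    linarith

/-- Apart from consecutive vertices only the endpoints may be assigned a distance, so that the
walk closed up by the pair `x y` is an induced cycle. -/
def IsChordless (w : Walk p x y) : Prop :=
  ∀ i j, i + 2 ≤ j → j ≤ w.length → (0 < i ∨ j < w.length) → p (w.vert i) (w.vert j) = none

/-- The vertices indexed cyclically, so that `vert length = y` is followed by `vert 0 = x`. -/
def cycle (w : Walk p x y) : ZMod (w.length + 1) → V := fun i => w.vert i.val

theorem cycle_natCast (w : Walk p x y) {j : ℕ} (hj : j ≤ w.length) : w.cycle j = w.vert j := by
  simp only [cycle, ZMod.val_cast_of_lt (Nat.lt_succ_of_le hj)]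

theorem cycle_add_one (w : Walk p x y) (i : ZMod (w.length + 1)) :
    w.cycle (i + 1) = if i.val = w.length then x else w.vert (i.val + 1) := by
  simp only [cycle, ZMod.val_add_one_eq_ite]
  split_ifs <;> simp [w.vert_zero]

theorem cycle_injective (w : Walk p x y) (hinj : Set.InjOn w.vert (Set.Iic w.length)) :
    Function.Injective w.cycle := fun i j hij =>
  ZMod.val_injective _ (hinj (Nat.lt_succ_iff.mp i.val_lt) (Nat.lt_succ_iff.mp j.val_lt) hij)

theorem cycle_adj (hsym : ∀ a b, p a b = p b a) (hxy : (p x y).isSome) (w : Walk p x y)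
    (i : ZMod (w.length + 1)) : (p (w.cycle i) (w.cycle (i + 1))).isSome := by
  have hi : i.val < w.length + 1 := i.val_lt
  rw [cycle_add_one]
  split_ifs with h
  · simpa [cycle, h, w.vert_length, hsym y x] using hxy
  · exact w.adj _ (by omega)

theorem cycle_eq_none (hsym : ∀ a b, p a b = p b a) (w : Walk p x y) (hw : w.IsChordless)
    {i j : ZMod (w.length + 1)} (hij : i ≠ j) (hji : j ≠ i + 1) (hij' : i ≠ j + 1) :
    p (w.cycle i) (w.cycle j) = none := by
  wlog hlt : i.val < j.val generalizing i j
  · rw [hsym]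
    exact this hij.symm hij' hji
      ((le_of_not_gt hlt).lt_of_ne fun h => hij (ZMod.val_injective _ h).symm)
  have hj : j.val < w.length + 1 := j.val_lt
  refine hw _ _ ?_ (by omega) ?_
  · by_contra hlt'
    exact hji (ZMod.val_injective _ (by rw [ZMod.val_add_one_eq_ite]; split_ifs <;> omega))
  · by_contra! h
    exact hij' (ZMod.val_injective _ (by rw [ZMod.val_add_one_eq_ite, if_pos (by omega)]; omega))

end Walk

theorem PolygonInequality.le_weight_of_isChordless (hpoly : PolygonInequality p)
    (hsym : ∀ a b, p a b = p b a) {x y : V} {c : ℝ} (hc : p x y = some c) (w : Walk p x y)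
    (hlen : 2 ≤ w.length) (hinj : Set.InjOn w.vert (Set.Iic w.length)) (hw : w.IsChordless) :
    c ≤ w.weight := by
  have : NeZero (w.length + 1) := ⟨w.length.succ_ne_zero⟩
  have hcycle := hpoly (w.length + 1) w.cycle _ (by omega) (w.cycle_injective hinj)
    (fun i => eq_some_edgeWeight (w.cycle_adj hsym (by simp [hc]) i))
    (fun i j => w.cycle_eq_none hsym hw) w.length (by omega)
  convert hcycle using 1
  · rw [w.cycle_natCast le_rfl, w.cycle_add_one, ZMod.val_cast_of_lt (by omega), if_pos rfl,
      w.vert_length, edgeWeight_of_eq_some (by rw [hsym]; exact hc)]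
  · rw [range_add_one, erase_insert notMem_range_self, Walk.weight]
    refine sum_congr rfl fun j hj => ?_
    have hj := mem_range.mp hj
    rw [w.cycle_natCast hj.le, w.cycle_add_one, ZMod.val_cast_of_lt (by omega), if_neg hj.ne]

theorem PolygonInequality.le_weight_of_eq_some (hpoly : PolygonInequality p)
    (hsym : ∀ a b, p a b = p b a) (hirr : ∀ a, p a a = none)
    (hnn : ∀ a b, 0 ≤ edgeWeight p a b) {x y : V} {c : ℝ} (hc : p x y = some c)
    (w : Walk p x y) : c ≤ w.weight := by
  suffices ∀ n, ∀ {x y : V} {c : ℝ}, p x y = some c → ∀ w : Walk p x y, w.length = n →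
      c ≤ w.weight from this _ hc w rfl
  intro n
  induction n using Nat.strong_induction_on with
  | _ n ih =>
  intro x y c hc w hn
  have hxy : x ≠ y := by rintro rfl; simp [hirr] at hc
  have of_shorter : ∀ w' : Walk p x y, w'.length < n → w'.weight ≤ w.weight → c ≤ w.weight :=
    fun w' hlt hle => (ih _ hlt hc w' rfl).trans hle
  by_cases hrep : ∃ s t, s < t ∧ t ≤ n ∧ w.vert s = w.vert t
  · obtain ⟨s, t, hst, htn, heq⟩ := hrep
    obtain ⟨w', hlt, hle⟩ := w.exists_shorter_of_shortcut hst.le (hn ▸ htn)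
      ((Walk.nil _).copy rfl heq) (by simp only [Walk.copy, Walk.nil]; omega)
      (by rw [Walk.weight_copy, Walk.weight_nil]; exact Walk.weight_nonneg hnn _)
    exact of_shorter w' (hn ▸ hlt) hle
  by_cases hchord : ∃ s t, s + 2 ≤ t ∧ t ≤ n ∧ (0 < s ∨ t < n) ∧ (p (w.vert s) (w.vert t)).isSome
  · obtain ⟨s, t, hst, htn, hne, hsome⟩ := hchord
    have hseg := ih (t - s) (by omega) (eq_some_edgeWeight hsome)
      (w.slice s t (by omega) (hn ▸ htn)) rfl
    obtain ⟨w', hlt, hle⟩ := w.exists_shorter_of_shortcut (by omega) (hn ▸ htn)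
      (Walk.single hsome) (by simp only [Walk.single]; omega) (by rwa [Walk.weight_single])
    exact of_shorter w' (hn ▸ hlt) hle
  push Not at hrep hchord
  have hn0 : n ≠ 0 := by
    rintro rfl
    exact hxy (w.vert_zero.symm.trans (hn ▸ w.vert_length))
  rcases (show n = 1 ∨ 2 ≤ n by omega) with rfl | hn2
  · have hy : w.vert 1 = y := by rw [← hn]; exact w.vert_length
    simp [Walk.weight, hn, w.vert_zero, hy, edgeWeight_of_eq_some hc]
  · refine hpoly.le_weight_of_isChordless hsym hc w (hn ▸ hn2) ?_ ?_
    · intro i hi j hj heq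
      rcases lt_trichotomy i j with h | h | h
      · exact absurd heq (hrep i j h (hn ▸ hj))
      · exact h
      · exact absurd heq.symm (hrep j i h (hn ▸ hi))
    · intro i j hij hj hne
      exact Option.not_isSome_iff_eq_none.mp (hchord i j hij (hn ▸ hj) (hn ▸ hne))

theorem min_sum_range_max'_mem {S : Finset ℝ} (hne : S.Nonempty) (hnn : ∀ s ∈ S, 0 ≤ s)
    (hclosed : ∀ a ∈ S, ∀ b ∈ S, min (a + b) (S.max' hne) ∈ S) {f : ℕ → ℝ} :
    ∀ {n : ℕ}, n ≠ 0 → (∀ i < n, f i ∈ S) → min (∑ i ∈ range n, f i) (S.max' hne) ∈ S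
  | 0, h, _ => absurd rfl h
  | 1, _, hf => by simpa [min_eq_left (S.le_max' _ (hf 0 one_pos))] using hf 0 one_pos
  | n + 2, _, hf => by
    have hlast := hf (n + 1) (by omega)
    have hprefix := min_sum_range_max'_mem hne hnn hclosed (n.succ_ne_zero)
      fun i hi => hf i (by omega)
    -- truncating the partial sum first does not change the result, as the summands are `≥ 0`
    have htrunc : min (∑ i ∈ range (n + 2), f i) (S.max' hne) =
        min (min (∑ i ∈ range (n + 1), f i) (S.max' hne) + f (n + 1)) (S.max' hne) := by
      rw [sum_range_succ _ (n + 1), ← min_add_add_right, min_assoc,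
        min_eq_right (le_add_of_nonneg_right (hnn _ hlast))]
    rw [htrunc]
    exact hclosed _ hprefix _ hlast

theorem Walk.min_weight_max'_mem {S : Finset ℝ} (hne : S.Nonempty) (hnn : ∀ s ∈ S, 0 ≤ s)
    (hclosed : ∀ a ∈ S, ∀ b ∈ S, min (a + b) (S.max' hne) ∈ S)
    (hS : ∀ a b c, p a b = some c → c ∈ S) {x y : V} (hxy : x ≠ y) (w : Walk p x y) :
    min w.weight (S.max' hne) ∈ S := by
  refine min_sum_range_max'_mem hne hnn hclosed ?_ fun i hi => ?_
  · intro h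
    exact hxy (w.vert_zero.symm.trans (h ▸ w.vert_length))
  · exact hS _ _ _ (eq_some_edgeWeight (w.adj i hi))

section Completion

variable {S : Finset ℝ} {hne : S.Nonempty} {x y z : V}

variable (p S hne) in
open Classical in
/-- The `s ∈ S` that bound the distance from `x` to `y` from above: `max S`, and every `s ∈ S`
exceeding the weight of some walk. Its least element is the completed distance. -/
noncomputable def walkBounds (x y : V) : Finset ℝ :=
  S.filter fun s => s = S.max' hne ∨ ∃ w : Walk p x y, w.weight ≤ s

theorem mem_walkBounds {s : ℝ} :
    s ∈ walkBounds p S hne x y ↔ s ∈ S ∧ (s = S.max' hne ∨ ∃ w : Walk p x y, w.weight ≤ s) := by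
  simp [walkBounds]

theorem max'_mem_walkBounds : S.max' hne ∈ walkBounds p S hne x y :=
  mem_walkBounds.2 ⟨S.max'_mem hne, Or.inl rfl⟩

theorem walkBounds_comm (hsym : ∀ a b, p a b = p b a) (x y : V) :
    walkBounds p S hne x y = walkBounds p S hne y x := by
  have key : ∀ x y : V, walkBounds p S hne x y ⊆ walkBounds p S hne y x := by
    intro x y s hs
    obtain ⟨hsS, hs | ⟨w, hw⟩⟩ := mem_walkBounds.1 hs
    · exact mem_walkBounds.2 ⟨hsS, Or.inl hs⟩
    · exact mem_walkBounds.2 ⟨hsS, Or.inr ⟨w.reverse hsym, (w.weight_reverse hsym).trans_le hw⟩⟩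
  exact Subset.antisymm (key x y) (key y x)

variable (p S hne) in
open Classical in
noncomputable def completion (x y : V) : ℝ :=
  if x = y then 0 else (walkBounds p S hne x y).min' ⟨_, max'_mem_walkBounds⟩

theorem completion_self (x : V) : completion p S hne x x = 0 := if_pos rfl

theorem completion_of_ne (hxy : x ≠ y) :
    completion p S hne x y = (walkBounds p S hne x y).min' ⟨_, max'_mem_walkBounds⟩ :=
  if_neg hxy

theorem completion_mem_walkBounds (hxy : x ≠ y) :
    completion p S hne x y ∈ walkBounds p S hne x y := by
  rw [completion_of_ne hxy]
  exact min'_mem _ _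

theorem completion_mem (hxy : x ≠ y) : completion p S hne x y ∈ S :=
  (mem_walkBounds.1 (completion_mem_walkBounds hxy)).1

theorem completion_eq_max'_or_exists_walk (hxy : x ≠ y) :
    completion p S hne x y = S.max' hne ∨ ∃ w : Walk p x y, w.weight ≤ completion p S hne x y :=
  (mem_walkBounds.1 (completion_mem_walkBounds hxy)).2

theorem completion_le_of_mem_walkBounds (hxy : x ≠ y) {s : ℝ} (hs : s ∈ walkBounds p S hne x y) :
    completion p S hne x y ≤ s := by
  rw [completion_of_ne hxy]
  exact min'_le _ _ hs

theorem completion_le_max' (hxy : x ≠ y) : completion p S hne x y ≤ S.max' hne :=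
  completion_le_of_mem_walkBounds hxy max'_mem_walkBounds

theorem completion_le_min_weight (hxy : x ≠ y) (w : Walk p x y)
    (hw : min w.weight (S.max' hne) ∈ S) : completion p S hne x y ≤ min w.weight (S.max' hne) := by
  refine completion_le_of_mem_walkBounds hxy (mem_walkBounds.2 ⟨hw, ?_⟩)
  rcases le_total w.weight (S.max' hne) with h | h
  · exact Or.inr ⟨w, (min_eq_left h).ge⟩
  · exact Or.inl (min_eq_right h)

theorem completion_comm (hsym : ∀ a b, p a b = p b a) (x y : V) :
    completion p S hne x y = completion p S hne y x := by
  by_cases hxy : x = y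
  · rw [hxy]
  · simp only [completion_of_ne hxy, completion_of_ne (Ne.symm hxy), walkBounds_comm hsym x y]

theorem completion_eq_zero_iff (hpos : ∀ s ∈ S, 0 < s) : completion p S hne x y = 0 ↔ x = y := by
  refine ⟨fun h => ?_, fun h => h ▸ completion_self x⟩
  by_contra hxy
  exact (hpos _ (completion_mem hxy)).ne' h

theorem completion_nonneg (hnn : ∀ s ∈ S, 0 ≤ s) (x y : V) : 0 ≤ completion p S hne x y := by
  by_cases hxy : x = y
  · rw [hxy, completion_self]
  · exact hnn _ (completion_mem hxy)

theorem completion_triangle (hnn : ∀ s ∈ S, 0 ≤ s)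
    (hclosed : ∀ a ∈ S, ∀ b ∈ S, min (a + b) (S.max' hne) ∈ S)
    (hS : ∀ a b c, p a b = some c → c ∈ S) (x y z : V) :
    completion p S hne x z ≤ completion p S hne x y + completion p S hne y z := by
  have hxy_nn := completion_nonneg (p := p) (hne := hne) hnn x y
  have hyz_nn := completion_nonneg (p := p) (hne := hne) hnn y z
  by_cases hxz : x = z
  · subst hxz
    rw [completion_self]
    exact add_nonneg hxy_nn hyz_nn
  by_cases hxy : x = y
  · rw [hxy, completion_self, zero_add]
  by_cases hyz : y = z
  · rw [hyz, completion_self, add_zero]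
  rcases completion_eq_max'_or_exists_walk (p := p) (hne := hne) hxy with h₁ | ⟨w₁, hw₁⟩
  · linarith [completion_le_max' (p := p) (hne := hne) hxz]
  rcases completion_eq_max'_or_exists_walk (p := p) (hne := hne) hyz with h₂ | ⟨w₂, hw₂⟩
  · linarith [completion_le_max' (p := p) (hne := hne) hxz]
  calc completion p S hne x z
      ≤ min (w₁.append w₂).weight (S.max' hne) :=
        completion_le_min_weight hxz _ (Walk.min_weight_max'_mem hne hnn hclosed hS hxz _)
    _ ≤ w₁.weight + w₂.weight := (min_le_left _ _).trans (Walk.weight_append w₁ w₂).le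
    _ ≤ _ := add_le_add hw₁ hw₂

theorem completion_eq_of_eq_some (hpoly : PolygonInequality p) (hsym : ∀ a b, p a b = p b a)
    (hirr : ∀ a, p a a = none) (hnn : ∀ s ∈ S, 0 ≤ s) (hS : ∀ a b c, p a b = some c → c ∈ S)
    {c : ℝ} (hc : p x y = some c) : completion p S hne x y = c := by
  have hxy : x ≠ y := by rintro rfl; simp [hirr] at hc
  have hcM : c ≤ S.max' hne := S.le_max' c (hS x y c hc)
  have hsingle : (Walk.single (p := p) (x := x) (y := y) (by simp [hc])).weight = c := by
    rw [Walk.weight_single, edgeWeight_of_eq_some hc]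
  refine le_antisymm ?_ ?_
  · have h := completion_le_min_weight (hne := hne) hxy _
      (by rw [hsingle, min_eq_left hcM]; exact hS x y c hc)
    rwa [hsingle, min_eq_left hcM] at h
  · rcases completion_eq_max'_or_exists_walk (hne := hne) hxy with h | ⟨w, hw⟩
    · exact h ▸ hcM
    · have hedge_nn := edgeWeight_nonneg (p := p) fun a b c h => hnn c (hS a b c h)
      exact (hpoly.le_weight_of_eq_some hsym hirr hedge_nn hc w).trans hw

end Completion

end PartialSMetric

open PartialSMetric

theorem S_metric_completion_general (S : Finset ℝ) (hne : S.Nonempty) (hpos : ∀ s ∈ S, 0 < s)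
    (hclosed : ∀ a ∈ S, ∀ b ∈ S, min (a + b) (S.max' hne) ∈ S)
    (V : Type) (p : V → V → Option ℝ)
    (hsym : ∀ x y, p x y = p y x) (hirr : ∀ x, p x x = none)
    (hS : ∀ x y v, p x y = some v → v ∈ S)
    (hcyc : ∀ (ℓ : ℕ) (v : ZMod ℓ → V) (dd : ZMod ℓ → ℝ),
      3 ≤ ℓ → Function.Injective v →
      (∀ i, p (v i) (v (i + 1)) = some (dd i)) →
      (∀ i j : ZMod ℓ, i ≠ j → j ≠ i + 1 → i ≠ j + 1 → p (v i) (v j) = none) →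
      ∀ i : ℕ, i < ℓ →
        dd (i : ZMod ℓ) ≤ ∑ j ∈ (Finset.range ℓ).erase i, dd (j : ZMod ℓ)) :
    ∃ D : V → V → ℝ,
      (∀ x y, D x y = D y x) ∧
      (∀ x y, D x y = 0 ↔ x = y) ∧
      (∀ x y, x ≠ y → D x y ∈ (S : Set ℝ)) ∧
      (∀ x y z, D x z ≤ D x y + D y z) ∧
      (∀ x y v, p x y = some v → D x y = v) := by
  have hnn : ∀ s ∈ S, 0 ≤ s := fun s hs => (hpos s hs).le
  exact ⟨completion p S hne, completion_comm hsym, fun _ _ => completion_eq_zero_iff hpos,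
    fun _ _ => completion_mem, completion_triangle hnn hclosed hS,
    fun _ _ _ => completion_eq_of_eq_some hcyc hsym hirr hnn hS⟩

/-- Let `S` be a finite set of positive reals closed under `a ⊕ b = min (a + b) (max S)`.
If every induced cycle of a countable partial `S`-metric space satisfies the polygon
inequality (no induced cycle is non-metric) and every one- and two-element substructure
is an `S`-metric space (all assigned distances lie in `S`), then the partial space can be
completed to a metric space with all distances of distinct points in `S`. -/
theorem S_metric_completion (S : Finset ℝ) (hne : S.Nonempty) (hpos : ∀ s ∈ S, 0 < s)
    (hclosed : ∀ a ∈ S, ∀ b ∈ S, min (a + b) (S.max' hne) ∈ S)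
    (V : Type) [Countable V] (p : V → V → Option ℝ)
    (hsym : ∀ x y, p x y = p y x) (hirr : ∀ x, p x x = none)
    (hS : ∀ x y v, p x y = some v → v ∈ S)
    (hcyc : ∀ (ℓ : ℕ) (v : ZMod ℓ → V) (dd : ZMod ℓ → ℝ),
      3 ≤ ℓ → Function.Injective v →
      (∀ i, p (v i) (v (i + 1)) = some (dd i)) →
      (∀ i j : ZMod ℓ, i ≠ j → j ≠ i + 1 → i ≠ j + 1 → p (v i) (v j) = none) →
      ∀ i : ℕ, i < ℓ →
        dd (i : ZMod ℓ) ≤ ∑ j ∈ (Finset.range ℓ).erase i, dd (j : ZMod ℓ)) :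
    ∃ D : V → V → ℝ,
      (∀ x y, D x y = D y x) ∧
      (∀ x y, D x y = 0 ↔ x = y) ∧
      (∀ x y, x ≠ y → D x y ∈ (S : Set ℝ)) ∧
      (∀ x y z, D x z ≤ D x y + D y z) ∧
      (∀ x y v, p x y = some v → D x y = v) :=
  S_metric_completion_general S hne hpos hclosed V p hsym hirr hS hcyc
end
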